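/- arXiv:1109.4005 — 4 statements merged into one kernel-verified Lean document; each statement's English description precedes it below -/
import Mathlib

section
/- There exists a constant C > 0, independent of σ, p₀ and μ₁, such that for every μ₁ ∈ [0,1] with μ₂ = 1 − μ₁, every σ > 0 and every p₀ ∈ ℝ³, the function (p₁,p₂) ↦ |μ₂p₁ − μ₁p₂| · (φ_{in,p₀}(p₁,p₂) − φ_{in}(p₁,p₂)) has L²(ℝ⁶) norm at most C·|p₀|. -/
open MeasureTheory Real

/-- `ℝ³` as a Euclidean space. -/
noncomputable abbrev R3 := EuclideanSpace ℝ (Fin 3)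

/-- The normalized Gaussian with variance `σ` and mean momentum `p₀`:
`φ_{p₀}(p) = (σ²π)^(−3/4) exp(−|p−p₀|²/(2σ²))`. -/
noncomputable def gauss (σ : ℝ) (p₀ p : R3) : ℂ :=
  (((σ ^ 2 * Real.pi) ^ (-(3 : ℝ) / 4) * Real.exp (-‖p - p₀‖ ^ 2 / (2 * σ ^ 2)) : ℝ) : ℂ)

/-- The incoming product state `φ_{in,p₀}(p₁,p₂) = φ_{p₀}(p₁)·φ_{−p₀}(p₂)`. -/
noncomputable def phiIn (σ : ℝ) (p₀ : R3) : R3 × R3 → ℂ :=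
  fun q => gauss σ p₀ q.1 * gauss σ (-p₀) q.2

open ENNReal
set_option maxHeartbeats 1000000

noncomputable def gR (σ : ℝ) (a : R3) (p : R3) : ℝ :=
  (σ ^ 2 * π) ^ (-(3 : ℝ) / 4) * rexp (-‖p - a‖ ^ 2 / (2 * σ ^ 2))

lemma gR_nonneg (σ : ℝ) (a p : R3) : 0 ≤ gR σ a p := by
  unfold gR
  positivity

lemma gR_continuous (σ : ℝ) (a : R3) : Continuous (gR σ a) := by
  unfold gR
  fun_prop

lemma sq_gR (σ : ℝ) (hσ : 0 < σ) (a p : R3) :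
    (gR σ a p) ^ 2 = (σ ^ 2 * π) ^ (-(3 : ℝ) / 2) * rexp (-(1 / σ ^ 2) * ‖p - a‖ ^ 2) := by
  unfold gR
  rw [mul_pow, ← Real.rpow_natCast ((σ ^ 2 * π) ^ (-(3 : ℝ) / 4)) 2,
    ← Real.rpow_mul (by positivity), sq (rexp _), ← Real.exp_add]
  congr 1
  · norm_num
  · congr 1
    field_simp
    ring

lemma Nmul {σ k : ℝ} (hσ : 0 < σ) (hk : 0 < k) :
    (σ ^ 2 * π) ^ (-(3 : ℝ) / 2) * (π / (1 / (k * σ ^ 2))) ^ (3 / 2 : ℝ)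
      = k ^ (3 / 2 : ℝ) := by
  have h1 : π / (1 / (k * σ ^ 2)) = k * (σ ^ 2 * π) := by
    field_simp
  have hb : (0 : ℝ) < σ ^ 2 * π := by positivity
  rw [h1, Real.mul_rpow hk.le hb.le, show (-(3 : ℝ) / 2) = -(3 / 2 : ℝ) by norm_num,
    Real.rpow_neg hb.le]
  have h2 : (σ ^ 2 * π) ^ (3 / 2 : ℝ) ≠ 0 := by positivity
  field_simp

lemma two_rpow_le : (2 : ℝ) ^ (3 / 2 : ℝ) ≤ 3 := by
  have h1 : ((2 : ℝ) ^ (3 / 2 : ℝ)) ^ 2 = 8 := by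
    rw [← Real.rpow_natCast ((2:ℝ) ^ (3/2:ℝ)) 2, ← Real.rpow_mul (by norm_num)]
    norm_num
  nlinarith [Real.rpow_nonneg (by norm_num : (0:ℝ) ≤ 2) (3/2 : ℝ)]

lemma integral_gauss_shift' {b : ℝ} (hb : 0 < b) (c : R3) :
    ∫ p : R3, rexp (-b * ‖p - c‖ ^ 2) = (π / b) ^ (3 / 2 : ℝ) := by
  rw [show (fun p : R3 => rexp (-b * ‖p - c‖ ^ 2))
      = fun p : R3 => (fun q : R3 => rexp (-b * ‖q‖ ^ 2)) (p - c) from rfl]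
  rw [integral_sub_right_eq_self (fun q : R3 => rexp (-b * ‖q‖ ^ 2)) c]
  rw [GaussianFourier.integral_rexp_neg_mul_sq_norm hb]
  norm_num [finrank_euclideanSpace_fin]

lemma integrable_gauss_shift' {b : ℝ} (hb : 0 < b) (c : R3) :
    Integrable (fun p : R3 => rexp (-b * ‖p - c‖ ^ 2)) := by
  have h := (GaussianFourier.integrable_cexp_neg_mul_sq_norm_add (V := R3) (b := (b : ℂ))
      (by simpa using hb) 0 0).norm
  have h2 : Integrable (fun p : R3 => rexp (-b * ‖p‖ ^ 2)) := by
    simpa [Complex.norm_exp, ← Complex.ofReal_pow] using h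
  exact h2.comp_sub_right c

/-- The base dominating function and its integral. -/
lemma integral_base {σ k : ℝ} (hσ : 0 < σ) (hk : 0 < k) (c : R3) :
    ∫ p : R3, (σ ^ 2 * π) ^ (-(3 : ℝ) / 2) * rexp (-(1 / (k * σ ^ 2)) * ‖p - c‖ ^ 2)
      = k ^ (3 / 2 : ℝ) := by
  have hb : (0 : ℝ) < 1 / (k * σ ^ 2) := by positivity
  rw [integral_const_mul, integral_gauss_shift' hb c, Nmul hσ hk]

lemma integrable_base {σ k : ℝ} (hσ : 0 < σ) (hk : 0 < k) (c : R3) :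
    Integrable (fun p : R3 =>
      (σ ^ 2 * π) ^ (-(3 : ℝ) / 2) * rexp (-(1 / (k * σ ^ 2)) * ‖p - c‖ ^ 2)) := by
  have hb : (0 : ℝ) < 1 / (k * σ ^ 2) := by positivity
  exact (integrable_gauss_shift' hb c).const_mul _
lemma eLpNorm_sq_le {α : Type*} [MeasurableSpace α] {μ : Measure α} {f g : α → ℝ} {B : ℝ}
    (hg : Integrable g μ) (hB : 0 ≤ B)
    (hfg : ∀ x, (f x) ^ 2 ≤ g x) (hgB : ∫ x, g x ∂μ ≤ B ^ 2) :
    eLpNorm f 2 μ ≤ ENNReal.ofReal B := by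
  rw [eLpNorm_eq_lintegral_rpow_enorm_toReal two_ne_zero ENNReal.ofNat_ne_top]
  simp only [enorm_eq_nnnorm]
  have h1 : ∀ x, ((‖f x‖₊ : ℝ≥0∞)) ^ ((2 : ℝ≥0∞).toReal) = ENNReal.ofReal ((f x) ^ 2) := by
    intro x
    rw [ENNReal.toReal_ofNat, ← enorm_eq_nnnorm, ← ofReal_norm,
      ENNReal.ofReal_rpow_of_nonneg (norm_nonneg _) (by norm_num : (0:ℝ) ≤ 2)]
    congr 1
    rw [Real.rpow_two, Real.norm_eq_abs, sq_abs]
  calc (∫⁻ x, ((‖f x‖₊ : ℝ≥0∞)) ^ ((2 : ℝ≥0∞).toReal) ∂μ) ^ (1 / (2 : ℝ≥0∞).toReal)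
      ≤ (ENNReal.ofReal (B ^ 2)) ^ (1 / (2 : ℝ≥0∞).toReal) := by
        gcongr
        simp only [h1]
        calc ∫⁻ x, ENNReal.ofReal ((f x) ^ 2) ∂μ
            ≤ ∫⁻ x, ENNReal.ofReal (g x) ∂μ :=
              lintegral_mono fun x => ENNReal.ofReal_le_ofReal (hfg x)
          _ = ENNReal.ofReal (∫ x, g x ∂μ) :=
              (MeasureTheory.ofReal_integral_eq_lintegral_ofReal hg
                (ae_of_all _ fun x => le_trans (sq_nonneg _) (hfg x))).symm
          _ ≤ ENNReal.ofReal (B ^ 2) := ENNReal.ofReal_le_ofReal hgB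
    _ = ENNReal.ofReal B := by
        rw [ENNReal.toReal_ofNat,
          ENNReal.ofReal_rpow_of_nonneg (sq_nonneg B) (by norm_num : (0:ℝ) ≤ 1/2)]
        congr 1
        rw [← Real.rpow_natCast B 2, ← Real.rpow_mul hB]
        norm_num

lemma bound_A {σ : ℝ} (hσ : 0 < σ) (a : R3) :
    eLpNorm (gR σ a) 2 volume ≤ ENNReal.ofReal 1 := by
  apply eLpNorm_sq_le (g := fun p : R3 =>
      (σ ^ 2 * π) ^ (-(3 : ℝ) / 2) * rexp (-(1 / (1 * σ ^ 2)) * ‖p - a‖ ^ 2))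
    (integrable_base hσ one_pos a) zero_le_one
  · intro p
    rw [sq_gR σ hσ a p, one_mul]
  · rw [integral_base hσ one_pos a, Real.one_rpow]
    norm_num

lemma bound_B {σ : ℝ} (hσ : 0 < σ) (a : R3) :
    eLpNorm (fun p => ‖p - a‖ * gR σ a p) 2 volume ≤ ENNReal.ofReal (3 * σ) := by
  apply eLpNorm_sq_le (g := fun p : R3 =>
      2 * σ ^ 2 * ((σ ^ 2 * π) ^ (-(3 : ℝ) / 2) * rexp (-(1 / (2 * σ ^ 2)) * ‖p - a‖ ^ 2)))
    ((integrable_base hσ two_pos a).const_mul _) (by positivity)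
  · intro p
    set r := ‖p - a‖ with hr
    have hrpos : 0 ≤ r := norm_nonneg _
    have h2 : (gR σ a p) ^ 2
        = (σ ^ 2 * π) ^ (-(3 : ℝ) / 2) * rexp (-(1 / σ ^ 2) * r ^ 2) := sq_gR σ hσ a p
    have hsplit : rexp (-(1 / σ ^ 2) * r ^ 2)
        = rexp (-(1 / (2 * σ ^ 2)) * r ^ 2) * rexp (-(1 / (2 * σ ^ 2)) * r ^ 2) := by
      rw [← Real.exp_add]
      congr 1
      field_simp
      ring
    have hkey : r ^ 2 * rexp (-(1 / (2 * σ ^ 2)) * r ^ 2) ≤ 2 * σ ^ 2 := by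
      have hu := Real.add_one_le_exp ((1 / (2 * σ ^ 2)) * r ^ 2)
      have he : rexp (-(1 / (2 * σ ^ 2)) * r ^ 2)
          = (rexp ((1 / (2 * σ ^ 2)) * r ^ 2))⁻¹ := by
        rw [← Real.exp_neg]; ring_nf
      rw [he, ← div_eq_mul_inv, div_le_iff₀ (Real.exp_pos _)]
      have hσ2 : 0 < σ ^ 2 := by positivity
      have hid : 2 * σ ^ 2 * (1 / (2 * σ ^ 2) * r ^ 2 + 1) = r ^ 2 + 2 * σ ^ 2 := by
        field_simp
      nlinarith [mul_le_mul_of_nonneg_left hu (by positivity : (0:ℝ) ≤ 2 * σ ^ 2)]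
    have hN : (0:ℝ) ≤ (σ ^ 2 * π) ^ (-(3 : ℝ) / 2) := by positivity
    have hE : (0:ℝ) < rexp (-(1 / (2 * σ ^ 2)) * r ^ 2) := Real.exp_pos _
    calc (r * gR σ a p) ^ 2 = r ^ 2 * (gR σ a p) ^ 2 := by ring
      _ = (σ ^ 2 * π) ^ (-(3 : ℝ) / 2) *
            (rexp (-(1 / (2 * σ ^ 2)) * r ^ 2) * (r ^ 2 * rexp (-(1 / (2 * σ ^ 2)) * r ^ 2))) := by
          rw [h2, hsplit]; ring
      _ ≤ (σ ^ 2 * π) ^ (-(3 : ℝ) / 2) *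
            (rexp (-(1 / (2 * σ ^ 2)) * r ^ 2) * (2 * σ ^ 2)) := by
          apply mul_le_mul_of_nonneg_left _ hN
          exact mul_le_mul_of_nonneg_left hkey hE.le
      _ = 2 * σ ^ 2 * ((σ ^ 2 * π) ^ (-(3 : ℝ) / 2) * rexp (-(1 / (2 * σ ^ 2)) * r ^ 2)) := by
          ring
  · rw [integral_const_mul, integral_base hσ two_pos a]
    nlinarith [two_rpow_le, sq_nonneg σ, hσ]

lemma bound_const {σ : ℝ} (hσ : 0 < σ) (a : R3) {c : ℝ} (hc : 0 ≤ c) :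
    eLpNorm (fun p => c * gR σ a p) 2 volume ≤ ENNReal.ofReal c := by
  apply eLpNorm_sq_le (g := fun p : R3 =>
      c ^ 2 * ((σ ^ 2 * π) ^ (-(3 : ℝ) / 2) * rexp (-(1 / (1 * σ ^ 2)) * ‖p - a‖ ^ 2)))
    ((integrable_base hσ one_pos a).const_mul _) hc
  · intro p
    rw [mul_pow, sq_gR σ hσ a p, one_mul]
  · rw [integral_const_mul, integral_base hσ one_pos a, Real.one_rpow, mul_one]

lemma cont_gR_aux {σ : ℝ} (a b : R3) :
    Continuous fun p : R3 => ‖p - b‖ * gR σ a p :=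
  ((continuous_id.sub continuous_const).norm).mul (gR_continuous σ a)

lemma bound_C {σ : ℝ} (hσ : 0 < σ) (a : R3) :
    eLpNorm (fun p => ‖p‖ * gR σ a p) 2 volume ≤ ENNReal.ofReal (‖a‖ + 3 * σ) := by
  have hmono : ∀ p : R3, ‖‖p‖ * gR σ a p‖
      ≤ ‖(fun p : R3 => ‖p - a‖ * gR σ a p + ‖a‖ * gR σ a p) p‖ := by
    intro p
    have h1 : ‖p‖ ≤ ‖p - a‖ + ‖a‖ := by
      have := norm_add_le (p - a) a
      simpa using this
    have h2 : (0:ℝ) ≤ gR σ a p := gR_nonneg σ a p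
    show ‖‖p‖ * gR σ a p‖ ≤ ‖‖p - a‖ * gR σ a p + ‖a‖ * gR σ a p‖
    rw [Real.norm_eq_abs, Real.norm_eq_abs, abs_of_nonneg (by positivity),
      abs_of_nonneg (by positivity)]
    nlinarith
  calc eLpNorm (fun p : R3 => ‖p‖ * gR σ a p) 2 volume
      ≤ eLpNorm (fun p : R3 => ‖p - a‖ * gR σ a p + ‖a‖ * gR σ a p) 2 volume :=
        eLpNorm_mono hmono
    _ ≤ eLpNorm (fun p : R3 => ‖p - a‖ * gR σ a p) 2 volume
        + eLpNorm (fun p : R3 => ‖a‖ * gR σ a p) 2 volume :=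
        eLpNorm_add_le (cont_gR_aux a a).aestronglyMeasurable
          (continuous_const.mul (gR_continuous σ a)).aestronglyMeasurable one_le_two
    _ ≤ ENNReal.ofReal (3 * σ) + ENNReal.ofReal ‖a‖ :=
        add_le_add (bound_B hσ a) (bound_const hσ a (norm_nonneg a))
    _ = ENNReal.ofReal (‖a‖ + 3 * σ) := by
        rw [← ENNReal.ofReal_add (by positivity) (norm_nonneg a), add_comm]

lemma exp_diff_aux {s t : ℝ} (h : s ≤ t) :
    rexp (-s) - rexp (-t) ≤ (t - s) * (rexp (-s) + rexp (-t)) := by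
  have h1 : rexp (-t) = rexp (-s) * rexp (-(t - s)) := by
    rw [← Real.exp_add]; ring_nf
  have h2 : 1 - (t - s) ≤ rexp (-(t - s)) := by
    have := Real.add_one_le_exp (-(t - s)); linarith
  nlinarith [Real.exp_pos (-s), Real.exp_pos (-t), (Real.exp_pos (-(t-s))).le]

lemma exp_diff (s t : ℝ) :
    |rexp (-s) - rexp (-t)| ≤ |s - t| * (rexp (-s) + rexp (-t)) := by
  rcases le_total s t with h | h
  · rw [abs_of_nonneg (by apply sub_nonneg.2; exact Real.exp_le_exp.2 (by linarith)),
      abs_of_nonpos (by linarith)]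
    have := exp_diff_aux h
    linarith
  · rw [abs_of_nonpos (by apply sub_nonpos.2; exact Real.exp_le_exp.2 (by linarith)),
      abs_of_nonneg (by linarith)]
    have := exp_diff_aux h
    linarith

lemma gR_sub_le {σ : ℝ} (hσ : 0 < σ) (a p : R3) :
    |gR σ a p - gR σ 0 p| ≤ (σ ^ 2 * π) ^ (-(3 : ℝ) / 4)
      * (‖a‖ * (‖a‖ + 2 * ‖p‖) / (2 * σ ^ 2))
      * (rexp (-‖p - a‖ ^ 2 / (2 * σ ^ 2)) + rexp (-‖p‖ ^ 2 / (2 * σ ^ 2))) := by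
  have hN : (0:ℝ) ≤ (σ ^ 2 * π) ^ (-(3 : ℝ) / 4) := by positivity
  unfold gR
  rw [sub_zero, ← mul_sub, abs_mul, abs_of_nonneg hN, mul_assoc]
  apply mul_le_mul_of_nonneg_left _ hN
  have key := exp_diff (‖p - a‖ ^ 2 / (2 * σ ^ 2)) (‖p‖ ^ 2 / (2 * σ ^ 2))
  have e1 : -‖p - a‖ ^ 2 / (2 * σ ^ 2) = -(‖p - a‖ ^ 2 / (2 * σ ^ 2)) := by ring
  have e2 : -‖p‖ ^ 2 / (2 * σ ^ 2) = -(‖p‖ ^ 2 / (2 * σ ^ 2)) := by ring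
  rw [e1, e2]
  refine key.trans (mul_le_mul_of_nonneg_right ?_ (by positivity))
  have hsq : ‖p - a‖ ^ 2 = ‖p‖ ^ 2 - 2 * inner ℝ p a + ‖a‖ ^ 2 :=
    (norm_sub_sq_real p a)
  have hinner : |inner ℝ p a| ≤ ‖p‖ * ‖a‖ := abs_real_inner_le_norm p a
  have : |‖p - a‖ ^ 2 / (2 * σ ^ 2) - ‖p‖ ^ 2 / (2 * σ ^ 2)|
      = |‖a‖ ^ 2 - 2 * inner ℝ p a| / (2 * σ ^ 2) := by
    rw [div_sub_div_same, abs_div, abs_of_pos (show (0:ℝ) < 2 * σ ^ 2 by positivity)]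
    congr 1
    rw [hsq]; ring_nf
  rw [this]
  apply div_le_div_of_nonneg_right ?_ (by positivity)
  · obtain ⟨hl, hr⟩ := abs_le.1 hinner
    rw [abs_le]
    constructor <;> nlinarith

lemma quad_le_exp {u : ℝ} (hu : 0 ≤ u) : 1 + u + u ^ 2 / 4 ≤ rexp u := by
  have h := Real.add_one_le_exp (u / 2)
  have h2 : rexp u = rexp (u / 2) * rexp (u / 2) := by rw [← Real.exp_add]; ring_nf
  nlinarith [Real.exp_pos (u / 2)]

lemma master1 {σ r A : ℝ} (hσ : 0 < σ) (hr : 0 ≤ r) (hA : 0 ≤ A)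
    (hAb : A ≤ 3 * σ + 2 * r) :
    A ^ 2 * rexp (-(1 / (2 * σ ^ 2)) * r ^ 2) ≤ 25 * σ ^ 2 := by
  set u := (1 / (2 * σ ^ 2)) * r ^ 2 with hu
  have hu0 : 0 ≤ u := by positivity
  have h1 : 2 * σ ^ 2 * u = r ^ 2 := by rw [hu]; field_simp
  have hexp := Real.add_one_le_exp u
  have he : rexp (-u) = (rexp u)⁻¹ := Real.exp_neg u
  rw [show -(1 / (2 * σ ^ 2)) * r ^ 2 = -u by rw [hu]; ring, he, ← div_eq_mul_inv,
    div_le_iff₀ (Real.exp_pos u)]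
  nlinarith [mul_le_mul_of_nonneg_left hexp (by positivity : (0:ℝ) ≤ 25 * σ ^ 2),
    sq_nonneg (4 * σ - (3/2) * r), sq_nonneg r, hσ.le]

lemma master2 {σ r A : ℝ} (hσ : 0 < σ) (hr : 0 ≤ r) (hA : 0 ≤ A)
    (hAb : A ≤ (3 * σ + 2 * r) * (σ + r)) :
    A ^ 2 * rexp (-(1 / (2 * σ ^ 2)) * r ^ 2) ≤ 625 * σ ^ 4 := by
  set u := (1 / (2 * σ ^ 2)) * r ^ 2 with hu
  have hu0 : 0 ≤ u := by positivity
  have h1 : 2 * σ ^ 2 * u = r ^ 2 := by rw [hu]; field_simp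
  have h2 : 4 * σ ^ 4 * u ^ 2 = r ^ 4 := by nlinarith [h1]
  have hexp := quad_le_exp hu0
  have he : rexp (-u) = (rexp u)⁻¹ := Real.exp_neg u
  rw [show -(1 / (2 * σ ^ 2)) * r ^ 2 = -u by rw [hu]; ring, he, ← div_eq_mul_inv,
    div_le_iff₀ (Real.exp_pos u)]
  nlinarith [mul_le_mul_of_nonneg_left hexp (by positivity : (0:ℝ) ≤ 625 * σ ^ 4),
    sq_nonneg (r ^ 2 - σ * r), sq_nonneg (σ * r - σ ^ 2), sq_nonneg (r ^ 2 - σ ^ 2),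
    mul_nonneg hr hσ.le, mul_nonneg (mul_nonneg hr hr) (mul_nonneg hr hσ.le), hσ.le]

lemma hNN {σ : ℝ} (hσ : 0 < σ) :
    ((σ ^ 2 * π) ^ (-(3:ℝ)/4)) ^ 2 = (σ ^ 2 * π) ^ (-(3:ℝ)/2) := by
  rw [← Real.rpow_natCast ((σ ^ 2 * π) ^ (-(3:ℝ)/4)) 2, ← Real.rpow_mul (by positivity)]
  norm_num

lemma bound_E {σ : ℝ} (hσ : 0 < σ) {a : R3} (ha : ‖a‖ ≤ σ) :
    eLpNorm (fun p => gR σ a p - gR σ 0 p) 2 volume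
      ≤ ENNReal.ofReal (9 * ‖a‖ / σ) := by
  apply eLpNorm_sq_le (g := fun p : R3 => (25 / 2) * (‖a‖ ^ 2 / σ ^ 2) *
      ((σ ^ 2 * π) ^ (-(3:ℝ)/2) * rexp (-(1 / (2 * σ ^ 2)) * ‖p - a‖ ^ 2)
        + (σ ^ 2 * π) ^ (-(3:ℝ)/2) * rexp (-(1 / (2 * σ ^ 2)) * ‖p - (0:R3)‖ ^ 2)))
    (((integrable_base hσ two_pos a).add (integrable_base hσ two_pos 0)).const_mul _)
    (by positivity)
  · intro p
    have hp1 : ‖p‖ ≤ ‖p - a‖ + σ := by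
      have h := norm_add_le (p - a) a
      simp only [sub_add_cancel] at h
      linarith
    have hp2 : ‖p‖ ≤ ‖p - (0:R3)‖ + σ := by
      rw [sub_zero]; linarith [hσ.le]
    set N : ℝ := (σ ^ 2 * π) ^ (-(3:ℝ)/4) with hN
    set A : ℝ := ‖a‖ + 2 * ‖p‖ with hA
    have hA0 : 0 ≤ A := by positivity
    set M : ℝ := ‖a‖ * A / (2 * σ ^ 2) with hM
    set E1 : ℝ := rexp (-(1 / (2 * σ ^ 2)) * ‖p - a‖ ^ 2) with hE1
    set E2 : ℝ := rexp (-(1 / (2 * σ ^ 2)) * ‖p - (0:R3)‖ ^ 2) with hE2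
    have hd : |gR σ a p - gR σ 0 p| ≤ N * M * (E1 + E2) := by
      have := gR_sub_le hσ a p
      have e1 : rexp (-‖p - a‖ ^ 2 / (2 * σ ^ 2)) = E1 := by rw [hE1]; congr 1; ring
      have e2 : rexp (-‖p‖ ^ 2 / (2 * σ ^ 2)) = E2 := by rw [hE2, sub_zero]; congr 1; ring
      rw [e1, e2] at this
      exact this
    have hsq : (gR σ a p - gR σ 0 p) ^ 2 ≤ (N * M * (E1 + E2)) ^ 2 := by
      rw [← sq_abs (gR σ a p - gR σ 0 p)]
      apply pow_le_pow_left₀ (abs_nonneg _) hd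
    refine hsq.trans ?_
    -- master bounds
    have hm1 : A ^ 2 * E1 ≤ 25 * σ ^ 2 :=
      master1 hσ (norm_nonneg _) hA0 (by rw [hA]; linarith)
    have hm2 : A ^ 2 * E2 ≤ 25 * σ ^ 2 :=
      master1 hσ (norm_nonneg _) hA0 (by rw [hA]; linarith)
    have hE1p : (0:ℝ) < E1 := Real.exp_pos _
    have hE2p : (0:ℝ) < E2 := Real.exp_pos _
    have hNsq : N ^ 2 = (σ ^ 2 * π) ^ (-(3:ℝ)/2) := hNN hσ
    have hN2p : (0:ℝ) ≤ (σ ^ 2 * π) ^ (-(3:ℝ)/2) := by positivity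
    -- (N M (E1+E2))² = N² M² (E1+E2)² ≤ 2 N² M² (E1²+E2²)
    have key : (N * M * (E1 + E2)) ^ 2
        ≤ (25 / 2) * (‖a‖ ^ 2 / σ ^ 2) * ((σ ^ 2 * π) ^ (-(3:ℝ)/2) * E1
            + (σ ^ 2 * π) ^ (-(3:ℝ)/2) * E2) := by
      have hM2 : M ^ 2 = ‖a‖ ^ 2 * A ^ 2 / (4 * σ ^ 4) := by rw [hM]; ring
      have hstep : M ^ 2 * (E1 + E2) ^ 2 ≤ (25/2) * (‖a‖ ^ 2 / σ ^ 2) * (E1 + E2) := by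
        have hskel : M ^ 2 * (E1 + E2) ^ 2 ≤ 2 * (M ^ 2 * E1 * E1 + M ^ 2 * E2 * E2) := by
          nlinarith [sq_nonneg (E1 - E2), sq_nonneg M]
        have hid : 25 / 4 * (‖a‖ ^ 2 / σ ^ 2) * (4 * σ ^ 4) = 25 * σ ^ 2 * ‖a‖ ^ 2 := by
          field_simp
        have hb1 : M ^ 2 * E1 ≤ (25/4) * (‖a‖ ^ 2 / σ ^ 2) := by
          rw [hM2, div_mul_eq_mul_div, div_le_iff₀ (by positivity : (0:ℝ) < 4 * σ ^ 4), hid]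
          nlinarith [mul_le_mul_of_nonneg_left hm1 (sq_nonneg ‖a‖)]
        have hb2 : M ^ 2 * E2 ≤ (25/4) * (‖a‖ ^ 2 / σ ^ 2) := by
          rw [hM2, div_mul_eq_mul_div, div_le_iff₀ (by positivity : (0:ℝ) < 4 * σ ^ 4), hid]
          nlinarith [mul_le_mul_of_nonneg_left hm2 (sq_nonneg ‖a‖)]
        calc M ^ 2 * (E1 + E2) ^ 2 ≤ 2 * (M ^ 2 * E1 * E1 + M ^ 2 * E2 * E2) := hskel
          _ ≤ 2 * ((25/4) * (‖a‖ ^ 2 / σ ^ 2) * E1 + (25/4) * (‖a‖ ^ 2 / σ ^ 2) * E2) := by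
              nlinarith [mul_le_mul_of_nonneg_right hb1 hE1p.le,
                mul_le_mul_of_nonneg_right hb2 hE2p.le]
          _ = (25/2) * (‖a‖ ^ 2 / σ ^ 2) * (E1 + E2) := by ring
      calc (N * M * (E1 + E2)) ^ 2 = N ^ 2 * (M ^ 2 * (E1 + E2) ^ 2) := by ring
        _ ≤ N ^ 2 * ((25/2) * (‖a‖ ^ 2 / σ ^ 2) * (E1 + E2)) := by
            apply mul_le_mul_of_nonneg_left hstep (sq_nonneg N)
        _ = (25 / 2) * (‖a‖ ^ 2 / σ ^ 2) * ((σ ^ 2 * π) ^ (-(3:ℝ)/2) * E1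
              + (σ ^ 2 * π) ^ (-(3:ℝ)/2) * E2) := by rw [hNsq]; ring
    exact key
  · rw [integral_const_mul, integral_add (integrable_base hσ two_pos a)
      (integrable_base hσ two_pos 0), integral_base hσ two_pos a, integral_base hσ two_pos 0]
    have h8 : (2:ℝ) ^ (3/2 : ℝ) ≤ 3 := two_rpow_le
    have hne : σ ≠ 0 := hσ.ne'
    rw [div_pow, mul_pow]
    calc 25 / 2 * (‖a‖ ^ 2 / σ ^ 2) * ((2:ℝ) ^ (3/2:ℝ) + (2:ℝ) ^ (3/2:ℝ))
        ≤ 25 / 2 * (‖a‖ ^ 2 / σ ^ 2) * 6 := by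
          have : (0:ℝ) ≤ ‖a‖ ^ 2 / σ ^ 2 := by positivity
          nlinarith
      _ ≤ 9 ^ 2 * ‖a‖ ^ 2 / σ ^ 2 := by
          have hc : (0:ℝ) ≤ ‖a‖ ^ 2 / σ ^ 2 := by positivity
          rw [mul_div_assoc]
          nlinarith [hc]

lemma bound_F {σ : ℝ} (hσ : 0 < σ) (a : R3) :
    eLpNorm (fun p => ‖p‖ * (gR σ a p - gR σ 0 p)) 2 volume
      ≤ ENNReal.ofReal (60 * ‖a‖) := by
  rcases le_total ‖a‖ σ with ha | ha
  · -- fine regime: ‖a‖ ≤ σ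
    apply eLpNorm_sq_le (g := fun p : R3 => (625 / 2) * ‖a‖ ^ 2 *
        ((σ ^ 2 * π) ^ (-(3:ℝ)/2) * rexp (-(1 / (2 * σ ^ 2)) * ‖p - a‖ ^ 2)
          + (σ ^ 2 * π) ^ (-(3:ℝ)/2) * rexp (-(1 / (2 * σ ^ 2)) * ‖p - (0:R3)‖ ^ 2)))
      (((integrable_base hσ two_pos a).add (integrable_base hσ two_pos 0)).const_mul _)
      (by positivity)
    · intro p
      have hp1 : ‖p‖ ≤ ‖p - a‖ + σ := by
        have h := norm_add_le (p - a) a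
        simp only [sub_add_cancel] at h
        linarith
      have hp2 : ‖p‖ ≤ ‖p - (0:R3)‖ + σ := by
        rw [sub_zero]; linarith [hσ.le]
      set N : ℝ := (σ ^ 2 * π) ^ (-(3:ℝ)/4) with hN
      set A : ℝ := (‖a‖ + 2 * ‖p‖) * ‖p‖ with hA
      have hA0 : 0 ≤ A := by positivity
      set M : ℝ := ‖a‖ * A / (2 * σ ^ 2) with hM
      set E1 : ℝ := rexp (-(1 / (2 * σ ^ 2)) * ‖p - a‖ ^ 2) with hE1
      set E2 : ℝ := rexp (-(1 / (2 * σ ^ 2)) * ‖p - (0:R3)‖ ^ 2) with hE2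
      have hd : |‖p‖ * (gR σ a p - gR σ 0 p)| ≤ N * M * (E1 + E2) := by
        have h := gR_sub_le hσ a p
        have e1 : rexp (-‖p - a‖ ^ 2 / (2 * σ ^ 2)) = E1 := by rw [hE1]; congr 1; ring
        have e2 : rexp (-‖p‖ ^ 2 / (2 * σ ^ 2)) = E2 := by rw [hE2, sub_zero]; congr 1; ring
        rw [e1, e2] at h
        rw [abs_mul, abs_of_nonneg (norm_nonneg p)]
        calc ‖p‖ * |gR σ a p - gR σ 0 p|
            ≤ ‖p‖ * (N * (‖a‖ * (‖a‖ + 2 * ‖p‖) / (2 * σ ^ 2)) * (E1 + E2)) :=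
              mul_le_mul_of_nonneg_left h (norm_nonneg p)
          _ = N * M * (E1 + E2) := by rw [hM, hA]; ring
      have hsq : (‖p‖ * (gR σ a p - gR σ 0 p)) ^ 2 ≤ (N * M * (E1 + E2)) ^ 2 := by
        rw [← sq_abs (‖p‖ * (gR σ a p - gR σ 0 p))]
        exact pow_le_pow_left₀ (abs_nonneg _) hd 2
      refine hsq.trans ?_
      have hm1 : A ^ 2 * E1 ≤ 625 * σ ^ 4 := by
        apply master2 hσ (norm_nonneg (p - a)) hA0
        rw [hA]
        have h1 : ‖a‖ + 2 * ‖p‖ ≤ 3 * σ + 2 * ‖p - a‖ := by linarith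
        have h2 : ‖p‖ ≤ σ + ‖p - a‖ := by linarith
        exact mul_le_mul h1 h2 (norm_nonneg p) (by positivity)
      have hm2 : A ^ 2 * E2 ≤ 625 * σ ^ 4 := by
        apply master2 hσ (norm_nonneg (p - (0:R3))) hA0
        rw [hA]
        have h1 : ‖a‖ + 2 * ‖p‖ ≤ 3 * σ + 2 * ‖p - (0:R3)‖ := by
          rw [sub_zero]; linarith
        have h2 : ‖p‖ ≤ σ + ‖p - (0:R3)‖ := by rw [sub_zero]; linarith [hσ.le]
        exact mul_le_mul h1 h2 (norm_nonneg p) (by positivity)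
      have hE1p : (0:ℝ) < E1 := Real.exp_pos _
      have hE2p : (0:ℝ) < E2 := Real.exp_pos _
      have hNsq : N ^ 2 = (σ ^ 2 * π) ^ (-(3:ℝ)/2) := hNN hσ
      have hM2 : M ^ 2 = ‖a‖ ^ 2 * A ^ 2 / (4 * σ ^ 4) := by rw [hM]; ring
      have hid : 625 / 4 * ‖a‖ ^ 2 * (4 * σ ^ 4) = 625 * σ ^ 4 * ‖a‖ ^ 2 := by ring
      have hb1 : M ^ 2 * E1 ≤ (625/4) * ‖a‖ ^ 2 := by
        rw [hM2, div_mul_eq_mul_div, div_le_iff₀ (by positivity : (0:ℝ) < 4 * σ ^ 4), hid]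
        nlinarith [mul_le_mul_of_nonneg_left hm1 (sq_nonneg ‖a‖)]
      have hb2 : M ^ 2 * E2 ≤ (625/4) * ‖a‖ ^ 2 := by
        rw [hM2, div_mul_eq_mul_div, div_le_iff₀ (by positivity : (0:ℝ) < 4 * σ ^ 4), hid]
        nlinarith [mul_le_mul_of_nonneg_left hm2 (sq_nonneg ‖a‖)]
      have hstep : M ^ 2 * (E1 + E2) ^ 2 ≤ (625/2) * ‖a‖ ^ 2 * (E1 + E2) := by
        have hskel : M ^ 2 * (E1 + E2) ^ 2 ≤ 2 * (M ^ 2 * E1 * E1 + M ^ 2 * E2 * E2) := by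
          nlinarith [sq_nonneg (E1 - E2), sq_nonneg M]
        nlinarith [mul_le_mul_of_nonneg_right hb1 hE1p.le,
          mul_le_mul_of_nonneg_right hb2 hE2p.le]
      calc (N * M * (E1 + E2)) ^ 2 = N ^ 2 * (M ^ 2 * (E1 + E2) ^ 2) := by ring
        _ ≤ N ^ 2 * ((625/2) * ‖a‖ ^ 2 * (E1 + E2)) :=
            mul_le_mul_of_nonneg_left hstep (sq_nonneg N)
        _ = (625 / 2) * ‖a‖ ^ 2 * ((σ ^ 2 * π) ^ (-(3:ℝ)/2) * E1
              + (σ ^ 2 * π) ^ (-(3:ℝ)/2) * E2) := by rw [hNsq]; ring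
    · rw [integral_const_mul, integral_add (integrable_base hσ two_pos a)
        (integrable_base hσ two_pos 0), integral_base hσ two_pos a, integral_base hσ two_pos 0]
      have h8 : (2:ℝ) ^ (3/2 : ℝ) ≤ 3 := two_rpow_le
      have hc : (0:ℝ) ≤ ‖a‖ ^ 2 := sq_nonneg _
      rw [mul_pow]
      nlinarith [Real.rpow_nonneg (by norm_num : (0:ℝ) ≤ 2) (3/2:ℝ)]
  · -- crude regime: σ ≤ ‖a‖
    have hmono : ∀ p : R3, ‖‖p‖ * (gR σ a p - gR σ 0 p)‖
        ≤ ‖(fun p : R3 => ‖p‖ * gR σ a p + ‖p‖ * gR σ 0 p) p‖ := by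
      intro p
      show |‖p‖ * (gR σ a p - gR σ 0 p)| ≤ |‖p‖ * gR σ a p + ‖p‖ * gR σ 0 p|
      rw [abs_mul, abs_of_nonneg (norm_nonneg p),
        abs_of_nonneg (add_nonneg (mul_nonneg (norm_nonneg p) (gR_nonneg σ a p))
          (mul_nonneg (norm_nonneg p) (gR_nonneg σ 0 p)))]
      have h2 : |gR σ a p - gR σ 0 p| ≤ gR σ a p + gR σ 0 p := by
        rw [abs_sub_le_iff]
        constructor <;> nlinarith [gR_nonneg σ a p, gR_nonneg σ 0 p]
      nlinarith [norm_nonneg p]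
    calc eLpNorm (fun p : R3 => ‖p‖ * (gR σ a p - gR σ 0 p)) 2 volume
        ≤ eLpNorm (fun p : R3 => ‖p‖ * gR σ a p + ‖p‖ * gR σ 0 p) 2 volume :=
          eLpNorm_mono hmono
      _ ≤ eLpNorm (fun p : R3 => ‖p‖ * gR σ a p) 2 volume
          + eLpNorm (fun p : R3 => ‖p‖ * gR σ 0 p) 2 volume :=
          eLpNorm_add_le (continuous_norm.mul (gR_continuous σ a)).aestronglyMeasurable
            (continuous_norm.mul (gR_continuous σ 0)).aestronglyMeasurable one_le_two
      _ ≤ ENNReal.ofReal (‖a‖ + 3 * σ) + ENNReal.ofReal (‖(0:R3)‖ + 3 * σ) :=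
          add_le_add (bound_C hσ a) (bound_C hσ 0)
      _ ≤ ENNReal.ofReal (60 * ‖a‖) := by
          rw [← ENNReal.ofReal_add (by positivity) (by positivity)]
          apply ENNReal.ofReal_le_ofReal
          rw [norm_zero]
          linarith [norm_nonneg a]

lemma bound_D {σ : ℝ} (hσ : 0 < σ) (a : R3) :
    eLpNorm (fun p => gR σ a p - gR σ 0 p) 2 volume ≤ ENNReal.ofReal 2 := by
  calc eLpNorm (fun p => gR σ a p - gR σ 0 p) 2 volume
      ≤ eLpNorm (gR σ a) 2 volume + eLpNorm (gR σ 0) 2 volume :=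
        eLpNorm_sub_le (gR_continuous σ a).aestronglyMeasurable
          (gR_continuous σ 0).aestronglyMeasurable one_le_two
    _ ≤ ENNReal.ofReal 1 + ENNReal.ofReal 1 := add_le_add (bound_A hσ a) (bound_A hσ 0)
    _ = ENNReal.ofReal 2 := by rw [← ENNReal.ofReal_add] <;> norm_num

lemma eLpNorm_prod_mul {f g : R3 → ℝ} (hf : Continuous f) (hg : Continuous g) :
    eLpNorm (fun q : R3 × R3 => f q.1 * g q.2) 2 volume
      = eLpNorm f 2 volume * eLpNorm g 2 volume := by
  rw [eLpNorm_eq_lintegral_rpow_enorm_toReal two_ne_zero ENNReal.ofNat_ne_top,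
    eLpNorm_eq_lintegral_rpow_enorm_toReal two_ne_zero ENNReal.ofNat_ne_top,
    eLpNorm_eq_lintegral_rpow_enorm_toReal two_ne_zero ENNReal.ofNat_ne_top]
  simp only [enorm_eq_nnnorm]
  have hpow : ∀ x : ℝ≥0∞, x ^ ((2:ℝ≥0∞).toReal) = x ^ (2:ℕ) := fun x => by
    rw [ENNReal.toReal_ofNat, ← ENNReal.rpow_natCast]
    norm_num
  simp only [hpow]
  have hsplit : ∀ q : R3 × R3, ((‖f q.1 * g q.2‖₊ : ℝ≥0∞)) ^ (2:ℕ)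
      = ((‖f q.1‖₊ : ℝ≥0∞)) ^ (2:ℕ) * ((‖g q.2‖₊ : ℝ≥0∞)) ^ (2:ℕ) := by
    intro q
    rw [nnnorm_mul, ENNReal.coe_mul, mul_pow]
  simp only [hsplit]
  rw [Measure.volume_eq_prod, lintegral_prod_mul
    ((hf.measurable.nnnorm.coe_nnreal_ennreal.pow_const 2).aemeasurable)
    ((hg.measurable.nnnorm.coe_nnreal_ennreal.pow_const 2).aemeasurable),
    ENNReal.toReal_ofNat, ENNReal.mul_rpow_of_nonneg _ _ (by norm_num : (0:ℝ) ≤ 1/2)]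


/-- There is a constant `C > 0`, independent of `σ`, `p₀` and `μ₁`, such that for all
`μ₁ ∈ [0,1]` (with `μ₂ = 1 − μ₁`), all `σ > 0` and all `p₀ ∈ ℝ³`, the function
`(p₁,p₂) ↦ |μ₂p₁ − μ₁p₂| · (φ_{in,p₀}(p₁,p₂) − φ_{in}(p₁,p₂))` has `L²(ℝ⁶)` norm
at most `C·|p₀|`. -/
theorem purity_stmt1 :
    ∃ C : ℝ, 0 < C ∧ ∀ μ₁ ∈ Set.Icc (0 : ℝ) 1, ∀ (σ : ℝ), 0 < σ → ∀ p₀ : R3,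
      eLpNorm
        (fun q : R3 × R3 =>
          (‖(1 - μ₁) • q.1 - μ₁ • q.2‖ : ℂ) * (phiIn σ p₀ q - phiIn σ 0 q)) 2 volume
        ≤ ENNReal.ofReal (C * ‖p₀‖) := by
  refine ⟨200, by norm_num, ?_⟩
  rintro μ₁ ⟨hμ0, hμ1⟩ σ hσ p₀
  -- the four product pieces
  set a1 : R3 → ℝ := fun p => ‖p‖ * |gR σ p₀ p - gR σ 0 p| with ha1
  set b1 : R3 → ℝ := fun p => gR σ (-p₀) p with hb1
  set a2 : R3 → ℝ := fun p => |gR σ p₀ p - gR σ 0 p| with ha2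
  set b2 : R3 → ℝ := fun p => ‖p‖ * gR σ (-p₀) p with hb2
  set a3 : R3 → ℝ := fun p => ‖p‖ * gR σ 0 p with ha3
  set b3 : R3 → ℝ := fun p => |gR σ (-p₀) p - gR σ 0 p| with hb3
  set a4 : R3 → ℝ := fun p => gR σ 0 p with ha4
  set b4 : R3 → ℝ := fun p => ‖p‖ * |gR σ (-p₀) p - gR σ 0 p| with hb4
  have hca1 : Continuous a1 :=
    continuous_norm.mul ((gR_continuous σ p₀).sub (gR_continuous σ 0)).abs
  have hcb1 : Continuous b1 := gR_continuous σ (-p₀)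
  have hca2 : Continuous a2 := ((gR_continuous σ p₀).sub (gR_continuous σ 0)).abs
  have hcb2 : Continuous b2 := continuous_norm.mul (gR_continuous σ (-p₀))
  have hca3 : Continuous a3 := continuous_norm.mul (gR_continuous σ 0)
  have hcb3 : Continuous b3 := ((gR_continuous σ (-p₀)).sub (gR_continuous σ 0)).abs
  have hca4 : Continuous a4 := gR_continuous σ 0
  have hcb4 : Continuous b4 :=
    continuous_norm.mul ((gR_continuous σ (-p₀)).sub (gR_continuous σ 0)).abs
  -- step 0 : reduce to a real-valued function
  have h0 : eLpNorm
        (fun q : R3 × R3 =>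
          (‖(1 - μ₁) • q.1 - μ₁ • q.2‖ : ℂ) * (phiIn σ p₀ q - phiIn σ 0 q)) 2 volume
      = eLpNorm (fun q : R3 × R3 => ‖(1 - μ₁) • q.1 - μ₁ • q.2‖ *
          (gR σ p₀ q.1 * gR σ (-p₀) q.2 - gR σ 0 q.1 * gR σ 0 q.2)) 2 volume := by
    apply eLpNorm_congr_norm_ae
    apply ae_of_all
    intro q
    have hphi : phiIn σ p₀ q - phiIn σ 0 q
        = ((gR σ p₀ q.1 * gR σ (-p₀) q.2 - gR σ 0 q.1 * gR σ 0 q.2 : ℝ) : ℂ) := by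
      simp only [phiIn, gauss, gR, neg_zero]
      push_cast
      ring
    rw [hphi, ← Complex.ofReal_mul, Complex.norm_real]
  rw [h0]
  -- step 1 : pointwise domination by the sum of the four pieces
  have hmono : ∀ q : R3 × R3, ‖(‖(1 - μ₁) • q.1 - μ₁ • q.2‖ *
        (gR σ p₀ q.1 * gR σ (-p₀) q.2 - gR σ 0 q.1 * gR σ 0 q.2) : ℝ)‖
      ≤ ‖(a1 q.1 * b1 q.2 + a2 q.1 * b2 q.2 + a3 q.1 * b3 q.2 + a4 q.1 * b4 q.2 : ℝ)‖ := by
    intro q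
    have hRHS : (0:ℝ) ≤ a1 q.1 * b1 q.2 + a2 q.1 * b2 q.2 + a3 q.1 * b3 q.2
        + a4 q.1 * b4 q.2 := by
      have n1 := gR_nonneg σ (-p₀) q.2
      have n2 := gR_nonneg σ 0 q.1
      have := abs_nonneg (gR σ p₀ q.1 - gR σ 0 q.1)
      have := abs_nonneg (gR σ (-p₀) q.2 - gR σ 0 q.2)
      have := norm_nonneg q.1
      have := norm_nonneg q.2
      simp only [ha1, hb1, ha2, hb2, ha3, hb3, ha4, hb4]
      positivity
    rw [Real.norm_eq_abs, Real.norm_eq_abs, abs_of_nonneg hRHS, abs_mul]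
    have hw : |‖(1 - μ₁) • q.1 - μ₁ • q.2‖| ≤ ‖q.1‖ + ‖q.2‖ := by
      rw [abs_of_nonneg (norm_nonneg _)]
      calc ‖(1 - μ₁) • q.1 - μ₁ • q.2‖ ≤ ‖(1 - μ₁) • q.1‖ + ‖μ₁ • q.2‖ := norm_sub_le _ _
        _ = |1 - μ₁| * ‖q.1‖ + |μ₁| * ‖q.2‖ := by
            rw [norm_smul, norm_smul, Real.norm_eq_abs, Real.norm_eq_abs]
        _ ≤ 1 * ‖q.1‖ + 1 * ‖q.2‖ := by
            apply add_le_add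
            · apply mul_le_mul_of_nonneg_right _ (norm_nonneg _)
              rw [abs_le]; constructor <;> linarith
            · apply mul_le_mul_of_nonneg_right _ (norm_nonneg _)
              rw [abs_le]; constructor <;> linarith
        _ = ‖q.1‖ + ‖q.2‖ := by ring
    have hΔ : |gR σ p₀ q.1 * gR σ (-p₀) q.2 - gR σ 0 q.1 * gR σ 0 q.2|
        ≤ |gR σ p₀ q.1 - gR σ 0 q.1| * gR σ (-p₀) q.2
          + gR σ 0 q.1 * |gR σ (-p₀) q.2 - gR σ 0 q.2| := by
      have hE : gR σ p₀ q.1 * gR σ (-p₀) q.2 - gR σ 0 q.1 * gR σ 0 q.2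
          = (gR σ p₀ q.1 - gR σ 0 q.1) * gR σ (-p₀) q.2
            + gR σ 0 q.1 * (gR σ (-p₀) q.2 - gR σ 0 q.2) := by ring
      rw [hE]
      calc |(gR σ p₀ q.1 - gR σ 0 q.1) * gR σ (-p₀) q.2
            + gR σ 0 q.1 * (gR σ (-p₀) q.2 - gR σ 0 q.2)|
          ≤ |(gR σ p₀ q.1 - gR σ 0 q.1) * gR σ (-p₀) q.2|
            + |gR σ 0 q.1 * (gR σ (-p₀) q.2 - gR σ 0 q.2)| := abs_add_le _ _
        _ = |gR σ p₀ q.1 - gR σ 0 q.1| * gR σ (-p₀) q.2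
            + gR σ 0 q.1 * |gR σ (-p₀) q.2 - gR σ 0 q.2| := by
            rw [abs_mul, abs_mul, abs_of_nonneg (gR_nonneg σ (-p₀) q.2),
              abs_of_nonneg (gR_nonneg σ 0 q.1)]
    have expand : (‖q.1‖ + ‖q.2‖) * (|gR σ p₀ q.1 - gR σ 0 q.1| * gR σ (-p₀) q.2
          + gR σ 0 q.1 * |gR σ (-p₀) q.2 - gR σ 0 q.2|)
        = a1 q.1 * b1 q.2 + a2 q.1 * b2 q.2 + a3 q.1 * b3 q.2 + a4 q.1 * b4 q.2 := by
      simp only [ha1, hb1, ha2, hb2, ha3, hb3, ha4, hb4]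
      ring
    calc |‖(1 - μ₁) • q.1 - μ₁ • q.2‖| *
          |gR σ p₀ q.1 * gR σ (-p₀) q.2 - gR σ 0 q.1 * gR σ 0 q.2|
        ≤ (‖q.1‖ + ‖q.2‖) * (|gR σ p₀ q.1 - gR σ 0 q.1| * gR σ (-p₀) q.2
            + gR σ 0 q.1 * |gR σ (-p₀) q.2 - gR σ 0 q.2|) := by
          apply mul_le_mul hw hΔ (abs_nonneg _)
          positivity
      _ = _ := expand
  refine le_trans (eLpNorm_mono hmono) ?_
  -- step 2 : triangle inequality
  have meas1 : AEStronglyMeasurable (fun q : R3 × R3 => a1 q.1 * b1 q.2) volume :=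
    ((hca1.comp continuous_fst).mul (hcb1.comp continuous_snd)).aestronglyMeasurable
  have meas2 : AEStronglyMeasurable (fun q : R3 × R3 => a2 q.1 * b2 q.2) volume :=
    ((hca2.comp continuous_fst).mul (hcb2.comp continuous_snd)).aestronglyMeasurable
  have meas3 : AEStronglyMeasurable (fun q : R3 × R3 => a3 q.1 * b3 q.2) volume :=
    ((hca3.comp continuous_fst).mul (hcb3.comp continuous_snd)).aestronglyMeasurable
  have meas4 : AEStronglyMeasurable (fun q : R3 × R3 => a4 q.1 * b4 q.2) volume :=
    ((hca4.comp continuous_fst).mul (hcb4.comp continuous_snd)).aestronglyMeasurable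
  have tri : eLpNorm (fun q : R3 × R3 =>
        a1 q.1 * b1 q.2 + a2 q.1 * b2 q.2 + a3 q.1 * b3 q.2 + a4 q.1 * b4 q.2) 2 volume
      ≤ eLpNorm (fun q : R3 × R3 => a1 q.1 * b1 q.2) 2 volume
        + eLpNorm (fun q : R3 × R3 => a2 q.1 * b2 q.2) 2 volume
        + eLpNorm (fun q : R3 × R3 => a3 q.1 * b3 q.2) 2 volume
        + eLpNorm (fun q : R3 × R3 => a4 q.1 * b4 q.2) 2 volume := by
    calc eLpNorm (fun q : R3 × R3 =>
          a1 q.1 * b1 q.2 + a2 q.1 * b2 q.2 + a3 q.1 * b3 q.2 + a4 q.1 * b4 q.2) 2 volume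
        ≤ eLpNorm (fun q : R3 × R3 =>
            a1 q.1 * b1 q.2 + a2 q.1 * b2 q.2 + a3 q.1 * b3 q.2) 2 volume
          + eLpNorm (fun q : R3 × R3 => a4 q.1 * b4 q.2) 2 volume :=
          eLpNorm_add_le (((meas1.add meas2).add meas3)) meas4 one_le_two
      _ ≤ (eLpNorm (fun q : R3 × R3 => a1 q.1 * b1 q.2 + a2 q.1 * b2 q.2) 2 volume
            + eLpNorm (fun q : R3 × R3 => a3 q.1 * b3 q.2) 2 volume)
          + eLpNorm (fun q : R3 × R3 => a4 q.1 * b4 q.2) 2 volume := by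
          gcongr
          exact eLpNorm_add_le (meas1.add meas2) meas3 one_le_two
      _ ≤ ((eLpNorm (fun q : R3 × R3 => a1 q.1 * b1 q.2) 2 volume
              + eLpNorm (fun q : R3 × R3 => a2 q.1 * b2 q.2) 2 volume)
            + eLpNorm (fun q : R3 × R3 => a3 q.1 * b3 q.2) 2 volume)
          + eLpNorm (fun q : R3 × R3 => a4 q.1 * b4 q.2) 2 volume := by
          gcongr
          exact eLpNorm_add_le meas1 meas2 one_le_two
  refine le_trans tri ?_
  -- step 3 : factor the products and bound the pieces
  rw [eLpNorm_prod_mul hca1 hcb1, eLpNorm_prod_mul hca2 hcb2,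
    eLpNorm_prod_mul hca3 hcb3, eLpNorm_prod_mul hca4 hcb4]
  -- remove the absolute values
  have habs : ∀ (u v : R3 → ℝ), (∀ p, |u p| = |v p|) →
      eLpNorm u 2 (volume : Measure R3) = eLpNorm v 2 volume := by
    intro u v h
    apply eLpNorm_congr_norm_ae
    apply ae_of_all
    intro p
    rw [Real.norm_eq_abs, Real.norm_eq_abs, h p]
  have ea1 : eLpNorm a1 2 volume
      = eLpNorm (fun p : R3 => ‖p‖ * (gR σ p₀ p - gR σ 0 p)) 2 volume := by
    apply habs
    intro p
    simp only [ha1]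
    rw [abs_mul, abs_mul, abs_abs]
  have ea2 : eLpNorm a2 2 volume
      = eLpNorm (fun p : R3 => gR σ p₀ p - gR σ 0 p) 2 volume := by
    apply habs
    intro p
    simp only [ha2, abs_abs]
  have eb3 : eLpNorm b3 2 volume
      = eLpNorm (fun p : R3 => gR σ (-p₀) p - gR σ 0 p) 2 volume := by
    apply habs
    intro p
    simp only [hb3, abs_abs]
  have eb4 : eLpNorm b4 2 volume
      = eLpNorm (fun p : R3 => ‖p‖ * (gR σ (-p₀) p - gR σ 0 p)) 2 volume := by
    apply habs
    intro p
    simp only [hb4]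
    rw [abs_mul, abs_mul, abs_abs]
  rw [ea1, ea2, eb3, eb4]
  -- the individual bounds
  have hB1 : eLpNorm (fun p : R3 => ‖p‖ * (gR σ p₀ p - gR σ 0 p)) 2 volume
      ≤ ENNReal.ofReal (60 * ‖p₀‖) := bound_F hσ p₀
  have hB1' : eLpNorm (fun p : R3 => ‖p‖ * (gR σ (-p₀) p - gR σ 0 p)) 2 volume
      ≤ ENNReal.ofReal (60 * ‖p₀‖) := by
    have := bound_F hσ (-p₀)
    rwa [norm_neg] at this
  have hG1 : eLpNorm b1 2 volume ≤ ENNReal.ofReal 1 := bound_A hσ (-p₀)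
  have hG4 : eLpNorm a4 2 volume ≤ ENNReal.ofReal 1 := bound_A hσ 0
  have hC2 : eLpNorm b2 2 volume ≤ ENNReal.ofReal (‖p₀‖ + 3 * σ) := by
    have := bound_C hσ (-p₀)
    rwa [norm_neg] at this
  have hC3 : eLpNorm a3 2 volume ≤ ENNReal.ofReal (3 * σ) := by
    have := bound_C hσ (0 : R3)
    rwa [norm_zero, zero_add] at this
  -- case split on the two regimes
  have key : eLpNorm (fun p : R3 => ‖p‖ * (gR σ p₀ p - gR σ 0 p)) 2 volume
        * eLpNorm b1 2 volume
      + eLpNorm (fun p : R3 => gR σ p₀ p - gR σ 0 p) 2 volume * eLpNorm b2 2 volume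
      + eLpNorm a3 2 volume * eLpNorm (fun p : R3 => gR σ (-p₀) p - gR σ 0 p) 2 volume
      + eLpNorm a4 2 volume
        * eLpNorm (fun p : R3 => ‖p‖ * (gR σ (-p₀) p - gR σ 0 p)) 2 volume
      ≤ ENNReal.ofReal (200 * ‖p₀‖) := by
    rcases le_total σ ‖p₀‖ with hreg | hreg
    · -- σ ≤ ‖p₀‖ : use the crude difference bound
      have hD2 : eLpNorm (fun p : R3 => gR σ p₀ p - gR σ 0 p) 2 volume
          ≤ ENNReal.ofReal 2 := bound_D hσ p₀
      have hD3 : eLpNorm (fun p : R3 => gR σ (-p₀) p - gR σ 0 p) 2 volume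
          ≤ ENNReal.ofReal 2 := bound_D hσ (-p₀)
      calc _ ≤ ENNReal.ofReal (60 * ‖p₀‖) * ENNReal.ofReal 1
            + ENNReal.ofReal 2 * ENNReal.ofReal (‖p₀‖ + 3 * σ)
            + ENNReal.ofReal (3 * σ) * ENNReal.ofReal 2
            + ENNReal.ofReal 1 * ENNReal.ofReal (60 * ‖p₀‖) := by
            gcongr <;> first
              | exact hB1 | exact hG1 | exact hD2 | exact hC2 | exact hC3 | exact hD3
              | exact hG4 | exact hB1'
        _ ≤ ENNReal.ofReal (200 * ‖p₀‖) := by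
            rw [← ENNReal.ofReal_mul (by positivity), ← ENNReal.ofReal_mul (by norm_num),
              ← ENNReal.ofReal_mul (by positivity), ← ENNReal.ofReal_mul (by norm_num),
              ← ENNReal.ofReal_add (by positivity) (by positivity),
              ← ENNReal.ofReal_add (by positivity) (by positivity),
              ← ENNReal.ofReal_add (by positivity) (by positivity)]
            apply ENNReal.ofReal_le_ofReal
            nlinarith [norm_nonneg p₀, hσ.le]
    · -- ‖p₀‖ ≤ σ : use the fine difference bound
      have hD2 : eLpNorm (fun p : R3 => gR σ p₀ p - gR σ 0 p) 2 volume
          ≤ ENNReal.ofReal (9 * ‖p₀‖ / σ) := bound_E hσ hreg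
      have hD3 : eLpNorm (fun p : R3 => gR σ (-p₀) p - gR σ 0 p) 2 volume
          ≤ ENNReal.ofReal (9 * ‖p₀‖ / σ) := by
        have hreg' : ‖-p₀‖ ≤ σ := by rwa [norm_neg]
        have := bound_E hσ hreg'
        rwa [norm_neg] at this
      calc _ ≤ ENNReal.ofReal (60 * ‖p₀‖) * ENNReal.ofReal 1
            + ENNReal.ofReal (9 * ‖p₀‖ / σ) * ENNReal.ofReal (‖p₀‖ + 3 * σ)
            + ENNReal.ofReal (3 * σ) * ENNReal.ofReal (9 * ‖p₀‖ / σ)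
            + ENNReal.ofReal 1 * ENNReal.ofReal (60 * ‖p₀‖) := by
            gcongr <;> first
              | exact hB1 | exact hG1 | exact hD2 | exact hC2 | exact hC3 | exact hD3
              | exact hG4 | exact hB1'
        _ ≤ ENNReal.ofReal (200 * ‖p₀‖) := by
            rw [← ENNReal.ofReal_mul (by positivity), ← ENNReal.ofReal_mul (by positivity),
              ← ENNReal.ofReal_mul (by positivity), ← ENNReal.ofReal_mul (by norm_num),
              ← ENNReal.ofReal_add (by positivity) (by positivity),
              ← ENNReal.ofReal_add (by positivity) (by positivity),
              ← ENNReal.ofReal_add (by positivity) (by positivity)]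
            apply ENNReal.ofReal_le_ofReal
            have h1 : 9 * ‖p₀‖ / σ * (‖p₀‖ + 3 * σ) ≤ 36 * ‖p₀‖ := by
              rw [div_mul_eq_mul_div, div_le_iff₀ hσ]
              nlinarith [norm_nonneg p₀]
            have h2 : 3 * σ * (9 * ‖p₀‖ / σ) = 27 * ‖p₀‖ := by
              field_simp
              ring
            nlinarith [norm_nonneg p₀]
  exact key
end

section
/- For any φ₁, φ₂, φ₃, φ₄ ∈ L²(ℝ³×ℝ³; ℂ), the function (p₁,p₁',p₂,p₂') ↦ φ₁(p₁,p₂)·conj(φ₂(p₁',p₂))·φ₃(p₁',p₂')·conj(φ₄(p₁,p₂')) is integrable on (ℝ³)⁴, and the modulus of its integral ℒ(φ₁,φ₂,φ₃,φ₄) is at most the product ‖φ₁‖·‖φ₂‖·‖φ₃‖·‖φ₄‖ of the L²(ℝ⁶) norms. -/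
open MeasureTheory

/-- The integrand of the functional `ℒ(φ₁,φ₂,φ₃,φ₄)`, as a function of
`(p₁, p₁', p₂, p₂') ∈ (ℝ³)⁴`. -/
noncomputable def Lint (φ₁ φ₂ φ₃ φ₄ : R3 × R3 → ℂ) :
    R3 × R3 × R3 × R3 → ℂ :=
  fun q =>
    φ₁ (q.1, q.2.2.1) * starRingEnd ℂ (φ₂ (q.2.1, q.2.2.1)) *
      φ₃ (q.2.1, q.2.2.2) * starRingEnd ℂ (φ₄ (q.1, q.2.2.2))

open scoped ENNReal NNReal

instance purity_iR3 : SigmaFinite (volume : Measure R3) := inferInstance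
instance purity_i2 : SigmaFinite (volume : Measure (R3 × R3)) := inferInstance
instance purity_i3 : SigmaFinite (volume : Measure (R3 × R3 × R3)) :=
  Measure.prod.instSigmaFinite
instance purity_i4 : SigmaFinite (volume : Measure (R3 × R3 × R3 × R3)) :=
  Measure.prod.instSigmaFinite

/-- The `L²` norm of `f(x)·g(y)` on a product space is the product of `L²` norms. -/
lemma purity_eLpNorm_prod_mul {α β : Type*} [MeasurableSpace α] [MeasurableSpace β]
    {μ : Measure α} {ν : Measure β} [SigmaFinite μ] [SigmaFinite ν]
    {f : α → ℂ} {g : β → ℂ} (hf : AEStronglyMeasurable f μ) (hg : AEStronglyMeasurable g ν) :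
    eLpNorm (fun x : α × β => f x.1 * g x.2) 2 (μ.prod ν)
      = eLpNorm f 2 μ * eLpNorm g 2 ν := by
  rw [eLpNorm_eq_lintegral_rpow_enorm_toReal (two_ne_zero) (ENNReal.ofNat_ne_top),
      eLpNorm_eq_lintegral_rpow_enorm_toReal (two_ne_zero) (ENNReal.ofNat_ne_top),
      eLpNorm_eq_lintegral_rpow_enorm_toReal (two_ne_zero) (ENNReal.ofNat_ne_top)]
  have key : ∫⁻ x : α × β, ‖f x.1 * g x.2‖ₑ ^ (2 : ℝ≥0∞).toReal ∂(μ.prod ν)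
      = (∫⁻ a, ‖f a‖ₑ ^ (2 : ℝ≥0∞).toReal ∂μ)
        * ∫⁻ b, ‖g b‖ₑ ^ (2 : ℝ≥0∞).toReal ∂ν := by
    rw [← lintegral_prod_mul (hf.enorm.pow_const _) (hg.enorm.pow_const _)]
    refine lintegral_congr fun x => ?_
    rw [enorm_mul, ENNReal.mul_rpow_of_nonneg _ _ (by positivity)]
  rw [key, ENNReal.mul_rpow_of_nonneg _ _ (by positivity)]

/-- `Memℒp` version of `purity_eLpNorm_prod_mul`. -/
lemma purity_memℒp_prod_mul {α β : Type*} [MeasurableSpace α] [MeasurableSpace β]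
    {μ : Measure α} {ν : Measure β} [SigmaFinite μ] [SigmaFinite ν]
    {f : α → ℂ} {g : β → ℂ} (hf : MemLp f 2 μ) (hg : MemLp g 2 ν) :
    MemLp (fun x : α × β => f x.1 * g x.2) 2 (μ.prod ν) := by
  refine ⟨?_, ?_⟩
  · exact (hf.1.comp_quasiMeasurePreserving Measure.quasiMeasurePreserving_fst).mul
      (hg.1.comp_quasiMeasurePreserving Measure.quasiMeasurePreserving_snd)
  · rw [purity_eLpNorm_prod_mul hf.1 hg.1]
    exact ENNReal.mul_lt_top hf.2 hg.2

/-- The coordinate permutation `(p₁,p₁',p₂,p₂') ↦ ((p₁,p₂),(p₁',p₂'))` preserves volume. -/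
lemma purity_hP : MeasurePreserving
    (fun q : R3 × R3 × R3 × R3 => ((q.1, q.2.2.1), (q.2.1, q.2.2.2)))
    volume volume := by
  have h1 : MeasurePreserving
      (Prod.map (id : R3 → R3)
        (MeasurableEquiv.prodAssoc.symm : R3 × R3 × R3 ≃ᵐ (R3 × R3) × R3))
      volume volume :=
    (MeasurePreserving.id volume).prod (volume_preserving_prodAssoc.symm _)
  have h2 : MeasurePreserving
      (Prod.map (id : R3 → R3)
        (Prod.map (Prod.swap : R3 × R3 → R3 × R3) (id : R3 → R3)))
      volume volume :=
    (MeasurePreserving.id volume).prod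
      ((Measure.measurePreserving_swap).prod (MeasurePreserving.id volume))
  have h3 : MeasurePreserving
      (Prod.map (id : R3 → R3)
        (MeasurableEquiv.prodAssoc : (R3 × R3) × R3 ≃ᵐ R3 × R3 × R3))
      volume volume :=
    (MeasurePreserving.id volume).prod volume_preserving_prodAssoc
  have h4 : MeasurePreserving
      (MeasurableEquiv.prodAssoc.symm : R3 × R3 × (R3 × R3) → (R3 × R3) × (R3 × R3))
      volume volume := volume_preserving_prodAssoc.symm MeasurableEquiv.prodAssoc
  exact ((h4.comp h3).comp h2).comp h1

/-- The coordinate permutation `(p₁,p₁',p₂,p₂') ↦ ((p₁',p₂),(p₁,p₂'))` preserves volume. -/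
lemma purity_hQ : MeasurePreserving
    (fun q : R3 × R3 × R3 × R3 => ((q.2.1, q.2.2.1), (q.1, q.2.2.2)))
    volume volume := by
  have s1 : MeasurePreserving
      (MeasurableEquiv.prodAssoc.symm : R3 × R3 × (R3 × R3) → (R3 × R3) × (R3 × R3))
      volume volume := volume_preserving_prodAssoc.symm MeasurableEquiv.prodAssoc
  have s2 : MeasurePreserving
      (Prod.map (Prod.swap : R3 × R3 → R3 × R3) (id : R3 × R3 → R3 × R3))
      volume volume :=
    (Measure.measurePreserving_swap).prod (MeasurePreserving.id volume)
  have s3 : MeasurePreserving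
      (MeasurableEquiv.prodAssoc : (R3 × R3) × (R3 × R3) ≃ᵐ R3 × R3 × (R3 × R3))
      volume volume := volume_preserving_prodAssoc
  exact purity_hP.comp ((s3.comp s2).comp s1)

/-- For `φ₁,…,φ₄ ∈ L²(ℝ³×ℝ³;ℂ)` the integrand of `ℒ(φ₁,φ₂,φ₃,φ₄)` is integrable on `(ℝ³)⁴`
and `|ℒ(φ₁,φ₂,φ₃,φ₄)| ≤ ‖φ₁‖·‖φ₂‖·‖φ₃‖·‖φ₄‖`. -/
theorem purity_stmt2 (φ₁ φ₂ φ₃ φ₄ : R3 × R3 → ℂ)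
    (h₁ : MemLp φ₁ 2 volume) (h₂ : MemLp φ₂ 2 volume)
    (h₃ : MemLp φ₃ 2 volume) (h₄ : MemLp φ₄ 2 volume) :
    Integrable (Lint φ₁ φ₂ φ₃ φ₄) volume ∧
      ‖∫ q, Lint φ₁ φ₂ φ₃ φ₄ q‖
        ≤ (eLpNorm φ₁ 2 volume).toReal * (eLpNorm φ₂ 2 volume).toReal *
            (eLpNorm φ₃ 2 volume).toReal * (eLpNorm φ₄ 2 volume).toReal := by
  classical
  -- conjugates of `φ₂`, `φ₄`
  have h₂' : MemLp (fun x => starRingEnd ℂ (φ₂ x)) 2 (volume : Measure (R3 × R3)) :=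
    ⟨RCLike.continuous_conj.comp_aestronglyMeasurable h₂.1,
      by rw [show (fun x => starRingEnd ℂ (φ₂ x)) = starRingEnd ℂ ∘ φ₂ from rfl]
         exact (eLpNorm_conj φ₂ 2 volume).le.trans_lt h₂.2⟩
  have h₄' : MemLp (fun x => starRingEnd ℂ (φ₄ x)) 2 (volume : Measure (R3 × R3)) :=
    ⟨RCLike.continuous_conj.comp_aestronglyMeasurable h₄.1,
      (eLpNorm_conj φ₄ 2 volume).le.trans_lt h₄.2⟩
  -- `H` and `K`
  set F : (R3 × R3) × (R3 × R3) → ℂ := fun x => φ₁ x.1 * φ₃ x.2 with hF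
  set G : (R3 × R3) × (R3 × R3) → ℂ :=
    fun x => starRingEnd ℂ (φ₂ x.1) * starRingEnd ℂ (φ₄ x.2) with hG
  have hFmem : MemLp F 2 volume := purity_memℒp_prod_mul h₁ h₃
  have hGmem : MemLp G 2 volume := purity_memℒp_prod_mul h₂' h₄'
  set P : R3 × R3 × R3 × R3 → (R3 × R3) × (R3 × R3) :=
    fun q => ((q.1, q.2.2.1), (q.2.1, q.2.2.2)) with hP
  set Q : R3 × R3 × R3 × R3 → (R3 × R3) × (R3 × R3) :=
    fun q => ((q.2.1, q.2.2.1), (q.1, q.2.2.2)) with hQ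
  have hHmem : MemLp (F ∘ P) 2 volume := hFmem.comp_measurePreserving purity_hP
  have hKmem : MemLp (G ∘ Q) 2 volume := hGmem.comp_measurePreserving purity_hQ
  have hHnorm : eLpNorm (F ∘ P) 2 volume = eLpNorm φ₁ 2 volume * eLpNorm φ₃ 2 volume := by
    rw [eLpNorm_comp_measurePreserving hFmem.1 purity_hP]
    exact purity_eLpNorm_prod_mul h₁.1 h₃.1
  have e2 : eLpNorm (fun x => starRingEnd ℂ (φ₂ x)) 2 (volume : Measure (R3 × R3))
      = eLpNorm φ₂ 2 volume := eLpNorm_conj φ₂ 2 volume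
  have e4 : eLpNorm (fun x => starRingEnd ℂ (φ₄ x)) 2 (volume : Measure (R3 × R3))
      = eLpNorm φ₄ 2 volume := eLpNorm_conj φ₄ 2 volume
  have hKnorm : eLpNorm (G ∘ Q) 2 volume = eLpNorm φ₂ 2 volume * eLpNorm φ₄ 2 volume := by
    rw [eLpNorm_comp_measurePreserving hGmem.1 purity_hQ]
    have := purity_eLpNorm_prod_mul h₂'.1 h₄'.1
    rw [e2, e4] at this
    exact this
  -- `Lint = (G ∘ Q) • (F ∘ P)`
  have hLint : Lint φ₁ φ₂ φ₃ φ₄ = (G ∘ Q) • (F ∘ P) := by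
    funext q
    simp only [Lint, Pi.smul_apply', Pi.smul_apply, smul_eq_mul, Function.comp_apply, hF, hG,
      hP, hQ]
    ring
  have hmem1 : MemLp (Lint φ₁ φ₂ φ₃ φ₄) 1 volume := by
    rw [hLint]
    exact hHmem.smul hKmem
  have hint : Integrable (Lint φ₁ φ₂ φ₃ φ₄) volume := memLp_one_iff_integrable.mp hmem1
  refine ⟨hint, ?_⟩
  -- the bound
  have hb1 : ‖∫ q, Lint φ₁ φ₂ φ₃ φ₄ q‖ ≤ (eLpNorm (Lint φ₁ φ₂ φ₃ φ₄) 1 volume).toReal := by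
    calc ‖∫ q, Lint φ₁ φ₂ φ₃ φ₄ q‖ ≤ ∫ q, ‖Lint φ₁ φ₂ φ₃ φ₄ q‖ :=
          norm_integral_le_integral_norm _
      _ = (eLpNorm (Lint φ₁ φ₂ φ₃ φ₄) 1 volume).toReal := by
          rw [eLpNorm_one_eq_lintegral_enorm, integral_norm_eq_lintegral_enorm hmem1.1]
  have hb2 : eLpNorm (Lint φ₁ φ₂ φ₃ φ₄) 1 volume
      ≤ eLpNorm (G ∘ Q) 2 volume * eLpNorm (F ∘ P) 2 volume := by
    rw [hLint]
    exact eLpNorm_smul_le_mul_eLpNorm hHmem.1 hKmem.1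
  have hfin : eLpNorm (G ∘ Q) 2 volume * eLpNorm (F ∘ P) 2 volume ≠ ⊤ :=
    ENNReal.mul_ne_top hKmem.eLpNorm_ne_top hHmem.eLpNorm_ne_top
  have hb3 : (eLpNorm (Lint φ₁ φ₂ φ₃ φ₄) 1 volume).toReal
      ≤ (eLpNorm (G ∘ Q) 2 volume * eLpNorm (F ∘ P) 2 volume).toReal :=
    ENNReal.toReal_mono hfin hb2
  refine hb1.trans (hb3.trans_eq ?_)
  rw [hHnorm, hKnorm, ENNReal.toReal_mul, ENNReal.toReal_mul, ENNReal.toReal_mul]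
  ring
end

section
/- For every x in the open interval (0, √2), the function F(x) := arctan(1/x) + arctan( x / (2 − √(2 + x²)) ) is differentiable at x with derivative F′(x) = 1 / ((1 + x²)·√(2 + x²)). -/
open Real

/-- For every `x ∈ (0, √2)`, the function
`F(x) = arctan(1/x) + arctan(x / (2 − √(2 + x²)))` is differentiable at `x` with
derivative `1 / ((1 + x²)·√(2 + x²))`. -/
theorem purity_stmt7 (x : ℝ) (hx : x ∈ Set.Ioo 0 (Real.sqrt 2)) :
    HasDerivAt
      (fun y : ℝ =>
        Real.arctan (1 / y) + Real.arctan (y / (2 - Real.sqrt (2 + y ^ 2))))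
      (1 / ((1 + x ^ 2) * Real.sqrt (2 + x ^ 2))) x := by
  obtain ⟨hx0, hx2⟩ := hx
  set s := Real.sqrt (2 + x ^ 2) with hs_def
  have hpos : (0:ℝ) < 2 + x ^ 2 := by positivity
  have hs2 : s ^ 2 = 2 + x ^ 2 := Real.sq_sqrt hpos.le
  have hs0 : 0 < s := Real.sqrt_pos.mpr hpos
  have hr2 : (Real.sqrt 2) ^ 2 = 2 := Real.sq_sqrt (by norm_num)
  have hxsq : x ^ 2 < 2 := by nlinarith [Real.sqrt_nonneg 2]
  have hslt : s < 2 := by nlinarith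
  have hsgt : 1 < s := by nlinarith
  have hden : (2 : ℝ) - s ≠ 0 := by linarith
  have hxne : x ≠ 0 := hx0.ne'
  -- derivative of inner polynomial
  have hsq : HasDerivAt (fun y : ℝ => 2 + y ^ 2) (2 * x) x := by
    simpa using (hasDerivAt_pow 2 x).const_add 2
  -- derivative of sqrt part
  have hsqrt : HasDerivAt (fun y : ℝ => Real.sqrt (2 + y ^ 2)) (x / s) x := by
    have h := (Real.hasDerivAt_sqrt (ne_of_gt hpos)).comp x hsq
    refine h.congr_deriv ?_
    rw [← hs_def]
    field_simp
  have hinv : HasDerivAt (fun y : ℝ => 1 / y) (-(1 / x ^ 2)) x := by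
    simpa [one_div] using hasDerivAt_inv hxne
  have h1 : HasDerivAt (fun y : ℝ => Real.arctan (1 / y))
      (1 / (1 + (1 / x) ^ 2) * (-(1 / x ^ 2))) x :=
    (Real.hasDerivAt_arctan (1 / x)).comp x hinv
  have hdenom : HasDerivAt (fun y : ℝ => 2 - Real.sqrt (2 + y ^ 2)) (-(x / s)) x :=
    hsqrt.const_sub 2
  have hg : HasDerivAt (fun y : ℝ => y / (2 - Real.sqrt (2 + y ^ 2)))
      ((1 * (2 - s) - x * (-(x / s))) / (2 - s) ^ 2) x := by
    have := (hasDerivAt_id x).fun_div hdenom hden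
    simpa [hs_def] using this
  have h2 : HasDerivAt (fun y : ℝ => Real.arctan (y / (2 - Real.sqrt (2 + y ^ 2))))
      (1 / (1 + (x / (2 - s)) ^ 2) * ((1 * (2 - s) - x * (-(x / s))) / (2 - s) ^ 2)) x :=
    hg.arctan
  have hsum := h1.add h2
  refine hsum.congr_deriv ?_
  have e1 : 1 / (1 + (1 / x) ^ 2) * (-(1 / x ^ 2)) = -(1 / (1 + x ^ 2)) := by
    have : (0:ℝ) < 1 + x ^ 2 := by positivity
    field_simp
    ring
  have hsne : s ≠ 0 := hs0.ne'
  have hs1ne : s - 1 ≠ 0 := by linarith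
  have e2 : 1 / (1 + (x / (2 - s)) ^ 2) * ((1 * (2 - s) - x * -(x / s)) / (2 - s) ^ 2)
      = 1 / (s * (s - 1)) := by
    have eA : 1 + (x / (2 - s)) ^ 2 = 2 * (s - 1) ^ 2 / (2 - s) ^ 2 := by
      rw [eq_div_iff (pow_ne_zero 2 hden)]
      have hx2s : x ^ 2 = s ^ 2 - 2 := by linarith
      field_simp
      linear_combination hx2s
    have eB : 1 * (2 - s) - x * -(x / s) = 2 * (s - 1) / s := by
      rw [eq_div_iff hsne]
      have hx2s : x ^ 2 = s ^ 2 - 2 := by linarith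
      field_simp
      linear_combination hx2s
    rw [eA, eB]
    field_simp
  rw [e1, e2]
  have h1x : 1 + x ^ 2 = (s - 1) * (s + 1) := by nlinarith
  rw [h1x]
  field_simp
  ring
end

section
/- For every q₂ ∈ ℝ³ with q₂ ≠ 0, ∫_{ℝ³} |q₁ − q₂|·exp(−|q₁|²) dq₁ = (π·exp(−|q₂|²)/|q₂|) · ∫₀^∞ exp(−ρ²)·ρ²·( exp(2|q₂|ρ) − exp(−2|q₂|ρ) ) dρ. -/
open MeasureTheory Real

open Set

section Aux

lemma exp_bound_aux {s c : ℝ} (hs : 0 ≤ s) (hc : 0 ≤ c) :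
    s * exp (c * s - s ^ 2) ≤ exp ((1 + c) ^ 2 / 2) * exp (-s ^ 2 / 2) := by
  have h1 : s ≤ exp s := (le_add_of_nonneg_left zero_le_one).trans (by linarith [add_one_le_exp s])
  calc s * exp (c * s - s ^ 2) ≤ exp s * exp (c * s - s ^ 2) :=
        mul_le_mul_of_nonneg_right h1 (exp_pos _).le
    _ = exp (s + (c * s - s ^ 2)) := by rw [← exp_add]
    _ ≤ exp ((1 + c) ^ 2 / 2 + -s ^ 2 / 2) := by
        apply exp_le_exp.mpr; nlinarith [sq_nonneg (1 + c - s)]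
    _ = _ := by rw [exp_add]

lemma exp_bound_aux2 {s c : ℝ} (hs : 0 ≤ s) (hc : 0 ≤ c) :
    s ^ 2 * exp (c * s - s ^ 2) ≤ exp ((2 + c) ^ 2 / 2) * exp (-s ^ 2 / 2) := by
  have h1 : s ^ 2 ≤ exp (2 * s) := by
    have : s ≤ exp s := (le_add_of_nonneg_left zero_le_one).trans (by linarith [add_one_le_exp s])
    calc s ^ 2 = s * s := sq s
      _ ≤ exp s * exp s := mul_le_mul this this hs (exp_pos _).le
      _ = exp (2 * s) := by rw [← exp_add]; ring_nf
  calc s ^ 2 * exp (c * s - s ^ 2) ≤ exp (2 * s) * exp (c * s - s ^ 2) :=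
        mul_le_mul_of_nonneg_right h1 (exp_pos _).le
    _ = exp (2 * s + (c * s - s ^ 2)) := by rw [← exp_add]
    _ ≤ exp ((2 + c) ^ 2 / 2 + -s ^ 2 / 2) := by
        apply exp_le_exp.mpr; nlinarith [sq_nonneg (2 + c - s)]
    _ = _ := by rw [exp_add]

lemma integrable_sq_exp (c : ℝ) : Integrable (fun t : ℝ => t ^ 2 * exp (c * t - t ^ 2)) := by
  have hint : Integrable (fun t : ℝ => exp ((2 + |c|) ^ 2 / 2) * exp (-(1/2) * t ^ 2)) :=
    (integrable_exp_neg_mul_sq (by norm_num : (0:ℝ) < 1/2)).const_mul _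
  refine hint.mono' (Continuous.aestronglyMeasurable (by continuity)) ?_
  filter_upwards with t
  rw [Real.norm_eq_abs, abs_mul, abs_of_nonneg (exp_pos _).le, abs_of_nonneg (sq_nonneg t)]
  have h1 : c * t ≤ |c| * |t| := by
    calc c * t ≤ |c * t| := le_abs_self _
      _ = |c| * |t| := abs_mul c t
  calc t ^ 2 * exp (c * t - t ^ 2)
      ≤ t ^ 2 * exp (|c| * |t| - t ^ 2) :=
        mul_le_mul_of_nonneg_left (exp_le_exp.mpr (by linarith)) (sq_nonneg _)
    _ = |t| ^ 2 * exp (|c| * |t| - |t| ^ 2) := by rw [sq_abs]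
    _ ≤ exp ((2 + |c|) ^ 2 / 2) * exp (-|t| ^ 2 / 2) :=
        exp_bound_aux2 (abs_nonneg t) (abs_nonneg c)
    _ = exp ((2 + |c|) ^ 2 / 2) * exp (-(1/2) * t ^ 2) := by rw [sq_abs]; ring_nf

lemma exp_Ioo_integral {a : ℝ} (ha : 0 < a) {t : ℝ} (ht : 0 < t) :
    ∫ x in Ioo (-t) t, exp (-(2 * a * x)) = (exp (2 * a * t) - exp (-(2 * a * t))) / (2 * a) := by
  have hle : -t ≤ t := by linarith
  have key : ∫ x in (-t)..t, exp (-(2 * a * x)) =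
      (fun y => exp (-(2 * a * y)) / (-(2 * a))) t - (fun y => exp (-(2 * a * y)) / (-(2 * a))) (-t) := by
    apply intervalIntegral.integral_eq_sub_of_hasDerivAt
    · intro x _
      have h1 : HasDerivAt (fun y : ℝ => -(2 * a * y)) (-(2 * a)) x := by
        simpa using ((hasDerivAt_id x).const_mul (2 * a)).fun_neg
      have h2 := (Real.hasDerivAt_exp (-(2 * a * x))).comp x h1
      have h3 := h2.div_const (-(2 * a))
      refine h3.congr_deriv ?_
      field_simp
    · exact (Continuous.intervalIntegrable (by continuity) _ _)
  rw [← integral_Ioc_eq_integral_Ioo, ← intervalIntegral.integral_of_le hle, key]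
  simp only
  rw [show 2 * a * -t = -(2 * a * t) by ring, neg_neg]
  field_simp
  ring

lemma subst_lemma (x : ℝ) :
    ∫ r in Ioi (0:ℝ), r * (Real.sqrt (x ^ 2 + r ^ 2) * exp (-(x ^ 2 + r ^ 2)))
      = ∫ t in Ioi |x|, t ^ 2 * exp (-t ^ 2) := by
  set f : ℝ → ℝ := fun t => Real.sqrt (t ^ 2 - x ^ 2) with hf
  set f' : ℝ → ℝ := fun t => t / Real.sqrt (t ^ 2 - x ^ 2) with hf'
  have hpos : ∀ t ∈ Ioi |x|, 0 < t ^ 2 - x ^ 2 := by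
    intro t ht
    simp only [mem_Ioi] at ht
    have h1 : -t < x := by have := neg_abs_le x; linarith
    have h2 : x < t := by have := le_abs_self x; linarith
    nlinarith
  have htpos : ∀ t ∈ Ioi |x|, 0 < t := fun t ht => lt_of_le_of_lt (abs_nonneg x) ht
  have hderiv : ∀ t ∈ Ioi |x|, HasDerivWithinAt f (f' t) (Ioi |x|) t := by
    intro t ht
    have hd : HasDerivAt (fun s : ℝ => s ^ 2 - x ^ 2) (2 * t) t := by
      simpa using ((hasDerivAt_pow 2 t).sub_const (x ^ 2))
    have h2 := (Real.hasDerivAt_sqrt (ne_of_gt (hpos t ht))).comp t hd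
    have : HasDerivAt f (f' t) t := by
      refine h2.congr_deriv ?_
      rw [hf']
      field_simp
    exact this.hasDerivWithinAt
  have hinj : InjOn f (Ioi |x|) := by
    intro t₁ h₁ t₂ h₂ he
    have e1 : t₁ ^ 2 - x ^ 2 = t₂ ^ 2 - x ^ 2 := by
      have := congrArg (fun y => y ^ 2) he
      simpa [hf, Real.sq_sqrt (hpos t₁ h₁).le, Real.sq_sqrt (hpos t₂ h₂).le] using this
    have h3 : t₁ ^ 2 = t₂ ^ 2 := by linarith
    have p1 := htpos t₁ h₁
    have p2 := htpos t₂ h₂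
    nlinarith
  have himg : f '' Ioi |x| = Ioi 0 := by
    ext r
    constructor
    · rintro ⟨t, ht, rfl⟩
      exact Real.sqrt_pos.mpr (hpos t ht)
    · intro hr
      simp only [mem_Ioi] at hr
      refine ⟨Real.sqrt (x ^ 2 + r ^ 2), ?_, ?_⟩
      · simp only [mem_Ioi]
        rw [← Real.sqrt_sq_eq_abs]
        apply Real.sqrt_lt_sqrt (sq_nonneg x)
        nlinarith
      · show Real.sqrt (Real.sqrt (x ^ 2 + r ^ 2) ^ 2 - x ^ 2) = r
        rw [Real.sq_sqrt (by positivity), show x ^ 2 + r ^ 2 - x ^ 2 = r ^ 2 by ring,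
          Real.sqrt_sq hr.le]
  have key := integral_image_eq_integral_abs_deriv_smul measurableSet_Ioi hderiv hinj
    (fun r => r * (Real.sqrt (x ^ 2 + r ^ 2) * exp (-(x ^ 2 + r ^ 2))))
  rw [himg] at key
  rw [key]
  apply setIntegral_congr_fun measurableSet_Ioi
  intro t ht
  have h1 := hpos t ht
  have h2 := htpos t ht
  have hs : Real.sqrt (t ^ 2 - x ^ 2) ≠ 0 := ne_of_gt (Real.sqrt_pos.mpr h1)
  simp only [hf, hf', smul_eq_mul]
  rw [Real.sq_sqrt h1.le, show x ^ 2 + (t ^ 2 - x ^ 2) = t ^ 2 by ring, Real.sqrt_sq h2.le,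
    abs_of_nonneg (by positivity : (0:ℝ) ≤ t / Real.sqrt (t ^ 2 - x ^ 2))]
  field_simp

lemma polar_lemma (x : ℝ) :
    ∫ p : ℝ × ℝ, Real.sqrt (x ^ 2 + (p.1 ^ 2 + p.2 ^ 2)) * exp (-(x ^ 2 + (p.1 ^ 2 + p.2 ^ 2)))
      = (2 * π) * ∫ r in Ioi (0:ℝ), r * (Real.sqrt (x ^ 2 + r ^ 2) * exp (-(x ^ 2 + r ^ 2))) := by
  rw [← integral_comp_polarCoord_symm
    (fun p => Real.sqrt (x ^ 2 + (p.1 ^ 2 + p.2 ^ 2)) * exp (-(x ^ 2 + (p.1 ^ 2 + p.2 ^ 2))))]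
  have hsq : ∀ p : ℝ × ℝ, ((polarCoord.symm p).1 ^ 2 + (polarCoord.symm p).2 ^ 2) = p.1 ^ 2 := by
    intro p
    rw [polarCoord_symm_apply]
    have := sin_sq_add_cos_sq p.2
    dsimp only
    nlinarith
  have key : ∀ p : ℝ × ℝ, p.1 • (Real.sqrt (x ^ 2 + ((polarCoord.symm p).1 ^ 2 + (polarCoord.symm p).2 ^ 2)) *
      exp (-(x ^ 2 + ((polarCoord.symm p).1 ^ 2 + (polarCoord.symm p).2 ^ 2))))
      = (fun r => r * (Real.sqrt (x ^ 2 + r ^ 2) * exp (-(x ^ 2 + r ^ 2)))) p.1 * (fun _ : ℝ => (1:ℝ)) p.2 := by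
    intro p
    rw [hsq p]
    simp [smul_eq_mul]
  rw [polarCoord_target]
  calc ∫ p in Ioi (0:ℝ) ×ˢ Ioo (-π) π, p.1 • (Real.sqrt (x ^ 2 + ((polarCoord.symm p).1 ^ 2 + (polarCoord.symm p).2 ^ 2)) *
      exp (-(x ^ 2 + ((polarCoord.symm p).1 ^ 2 + (polarCoord.symm p).2 ^ 2))))
      = ∫ p in Ioi (0:ℝ) ×ˢ Ioo (-π) π, (fun r => r * (Real.sqrt (x ^ 2 + r ^ 2) * exp (-(x ^ 2 + r ^ 2)))) p.1 * (fun _ : ℝ => (1:ℝ)) p.2 := by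
        exact setIntegral_congr_fun (measurableSet_Ioi.prod measurableSet_Ioo) (fun p _ => key p)
    _ = (∫ r in Ioi (0:ℝ), r * (Real.sqrt (x ^ 2 + r ^ 2) * exp (-(x ^ 2 + r ^ 2)))) * ∫ _ in Ioo (-π) π, (1:ℝ) := by
        rw [Measure.volume_eq_prod]
        exact setIntegral_prod_mul (L := ℝ) (fun r => r * (Real.sqrt (x ^ 2 + r ^ 2) * exp (-(x ^ 2 + r ^ 2)))) (fun _ => (1:ℝ)) _ _
    _ = (2 * π) * ∫ r in Ioi (0:ℝ), r * (Real.sqrt (x ^ 2 + r ^ 2) * exp (-(x ^ 2 + r ^ 2))) := by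
        rw [setIntegral_const, smul_eq_mul, mul_one,
          Real.volume_real_Ioo_of_le (by linarith [pi_pos] : -π ≤ π)]
        ring

lemma fubini_swap {a : ℝ} (ha : 0 < a) :
    ∫ x : ℝ, exp (-(2 * a * x)) * ∫ t in Ioi |x|, t ^ 2 * exp (-t ^ 2)
      = ∫ t in Ioi (0:ℝ),
          (t ^ 2 * exp (-t ^ 2)) * ((exp (2 * a * t) - exp (-(2 * a * t))) / (2 * a)) := by
  set S : Set (ℝ × ℝ) := {p | |p.1| < p.2} with hSdef
  set φ : ℝ × ℝ → ℝ := fun p => exp (-(2 * a * p.1)) * (p.2 ^ 2 * exp (-p.2 ^ 2)) with hφdef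
  have hS : MeasurableSet S := measurableSet_lt (measurable_fst.abs) measurable_snd
  have hφm : Measurable φ := by measurability
  set Φ : ℝ × ℝ → ℝ := S.indicator φ with hΦdef
  have hΦnonneg : ∀ p, 0 ≤ Φ p := by
    intro p
    apply Set.indicator_nonneg
    intro q _
    positivity
  have hxslice : ∀ t : ℝ, (fun x => Φ (x, t))
      = (Ioo (-t) t).indicator (fun x => exp (-(2 * a * x)) * (t ^ 2 * exp (-t ^ 2))) := by
    intro t
    funext x
    simp only [hΦdef, hφdef, hSdef, Set.indicator_apply, mem_setOf_eq, mem_Ioo]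
    simp only [abs_lt]
  have htslice : ∀ x : ℝ, (fun t => Φ (x, t))
      = (Ioi |x|).indicator (fun t => exp (-(2 * a * x)) * (t ^ 2 * exp (-t ^ 2))) := by
    intro x
    funext t
    simp [hΦdef, hφdef, hSdef, Set.indicator_apply, mem_setOf_eq, mem_Ioi]
  have hx_int : ∀ t : ℝ, Integrable (fun x => Φ (x, t)) := by
    intro t
    rw [hxslice t]
    apply IntegrableOn.integrable_indicator _ measurableSet_Ioo
    exact ((Continuous.integrableOn_Icc (by continuity)).mono_set Ioo_subset_Icc_self)
  have hslice_int : ∀ t : ℝ, (∫ x, Φ (x, t))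
      = (Ioi (0:ℝ)).indicator
          (fun t => (t ^ 2 * exp (-t ^ 2)) * ((exp (2 * a * t) - exp (-(2 * a * t))) / (2 * a))) t := by
    intro t
    rw [hxslice t]
    rcases le_or_gt t 0 with ht | ht
    · rw [Ioo_eq_empty (by intro h; linarith : ¬ (-t) < t)]
      simp [Set.indicator_of_notMem (by simpa using ht : t ∉ Ioi (0:ℝ))]
    · rw [integral_indicator measurableSet_Ioo, integral_mul_const, exp_Ioo_integral ha ht,
        Set.indicator_of_mem (by simpa using ht)]
      ring
  have hmeas : AEStronglyMeasurable Φ (volume.prod volume) := by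
    rw [← Measure.volume_eq_prod]
    exact (hφm.indicator hS).aestronglyMeasurable
  have hnorm_int : Integrable (fun t => ∫ x, ‖Φ (x, t)‖) := by
    have hre : (fun t => ∫ x, ‖Φ (x, t)‖) = fun t => ∫ x, Φ (x, t) := by
      funext t
      congr 1
      funext x
      exact norm_of_nonneg (hΦnonneg _)
    rw [hre, funext hslice_int]
    set G : ℝ → ℝ := fun t => (t ^ 2 * exp (2 * a * t - t ^ 2)) * (2 * a)⁻¹ with hGdef
    have hGint : Integrable G := (integrable_sq_exp (2 * a)).mul_const _
    apply hGint.mono'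
    · exact ((Continuous.measurable (by fun_prop)).indicator measurableSet_Ioi).aestronglyMeasurable
    · filter_upwards with t
      rcases le_or_gt t 0 with ht | ht
      · rw [Set.indicator_of_notMem (by simpa using ht)]
        simp only [norm_zero, hGdef]
        positivity
      · rw [Set.indicator_of_mem (by simpa using ht)]
        have h1 : 0 ≤ exp (2 * a * t) - exp (-(2 * a * t)) := by
          have : -(2 * a * t) ≤ 2 * a * t := by nlinarith
          linarith [exp_le_exp.mpr this]
        rw [norm_of_nonneg (by positivity)]
        have h2 : exp (-t ^ 2) * (exp (2 * a * t) - exp (-(2 * a * t))) ≤ exp (2 * a * t - t ^ 2) := by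
          rw [show (2 : ℝ) * a * t - t ^ 2 = -t ^ 2 + 2 * a * t by ring, exp_add]
          have : exp (2 * a * t) - exp (-(2 * a * t)) ≤ exp (2 * a * t) := by
            linarith [exp_pos (-(2 * a * t))]
          exact mul_le_mul_of_nonneg_left this (exp_pos _).le
        rw [hGdef]
        simp only
        rw [div_eq_mul_inv]
        have h3 : (0:ℝ) ≤ (2 * a)⁻¹ := by positivity
        nlinarith [mul_le_mul_of_nonneg_left h2 (sq_nonneg t)]
  have hΦint : Integrable Φ (volume.prod volume) :=
    (integrable_prod_iff' hmeas).mpr ⟨Filter.Eventually.of_forall hx_int, hnorm_int⟩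
  calc ∫ x : ℝ, exp (-(2 * a * x)) * ∫ t in Ioi |x|, t ^ 2 * exp (-t ^ 2)
      = ∫ x : ℝ, ∫ t : ℝ, Φ (x, t) := by
        congr 1
        funext x
        rw [htslice x, integral_indicator measurableSet_Ioi, integral_const_mul]
    _ = ∫ z : ℝ × ℝ, Φ z ∂(volume.prod volume) := (integral_prod Φ hΦint).symm
    _ = ∫ t : ℝ, ∫ x : ℝ, Φ (x, t) := integral_prod_symm Φ hΦint
    _ = ∫ t : ℝ, (Ioi (0:ℝ)).indicator
          (fun t => (t ^ 2 * exp (-t ^ 2)) * ((exp (2 * a * t) - exp (-(2 * a * t))) / (2 * a))) t := by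
        rw [funext hslice_int]
    _ = _ := integral_indicator measurableSet_Ioi

noncomputable def ψe : (ℝ × (ℝ × ℝ)) ≃ᵐ R3 :=
  ((MeasurableEquiv.refl ℝ).prodCongr MeasurableEquiv.finTwoArrow.symm).trans
    (((MeasurableEquiv.piFinSuccAbove (fun _ : Fin 3 => ℝ) 0).symm).trans
      (MeasurableEquiv.toLp 2 (Fin 3 → ℝ)))

lemma ψe_measurePreserving : MeasurePreserving ψe := by
  have h1 : MeasurePreserving ((MeasurableEquiv.toLp 2 (Fin 3 → ℝ))) volume volume :=
    (EuclideanSpace.volume_preserving_symm_measurableEquiv_toLp (Fin 3)).symm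
  have h2 : MeasurePreserving ((MeasurableEquiv.piFinSuccAbove (fun _ : Fin 3 => ℝ) 0).symm)
      volume volume :=
    (MeasureTheory.volume_preserving_piFinSuccAbove (fun _ : Fin 3 => ℝ) 0).symm _
  have h3 : MeasurePreserving
      ((MeasurableEquiv.refl ℝ).prodCongr MeasurableEquiv.finTwoArrow.symm) volume volume :=
    (MeasurePreserving.id volume).prod ((MeasureTheory.volume_preserving_finTwoArrow ℝ).symm _)
  exact (h1.comp h2).comp h3

lemma ψe_apply_coords (p : ℝ × (ℝ × ℝ)) :
    (ψe p : EuclideanSpace ℝ (Fin 3)) 0 = p.1 ∧ (ψe p) 1 = p.2.1 ∧ (ψe p) 2 = p.2.2 := by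
  refine ⟨?_, ?_, ?_⟩ <;>
    simp [ψe, MeasurableEquiv.piFinSuccAbove, MeasurableEquiv.toLp,
      MeasurableEquiv.finTwoArrow, MeasurableEquiv.piFinTwo, Fin.insertNth, Fin.succAbove,
      MeasurableEquiv.prodCongr, MeasurableEquiv.refl, Fin.cons] <;> rfl

lemma ψe_norm (p : ℝ × (ℝ × ℝ)) :
    ‖(ψe p : EuclideanSpace ℝ (Fin 3))‖ = Real.sqrt (p.1 ^ 2 + (p.2.1 ^ 2 + p.2.2 ^ 2)) := by
  obtain ⟨h0, h1, h2⟩ := ψe_apply_coords p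
  rw [EuclideanSpace.norm_eq]
  congr 1
  rw [Fin.sum_univ_three, h0, h1, h2]
  simp [Real.norm_eq_abs, sq_abs]
  ring

lemma abs_coord_le_norm (u : R3) (i : Fin 3) : |u i| ≤ ‖u‖ := by
  rw [EuclideanSpace.norm_eq, ← Real.sqrt_sq_eq_abs]
  apply Real.sqrt_le_sqrt
  calc u i ^ 2 = ‖u i‖ ^ 2 := by rw [Real.norm_eq_abs, sq_abs]
    _ ≤ ∑ j, ‖u j‖ ^ 2 :=
        Finset.single_le_sum (f := fun j => ‖u j‖ ^ 2) (fun j _ => sq_nonneg _) (Finset.mem_univ i)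

lemma integrable_F0 {a : ℝ} (ha : 0 < a) :
    Integrable (fun u : R3 => ‖u‖ * exp (-(‖u‖ ^ 2 + 2 * a * (u 0)))) := by
  have hg : Integrable (fun v : R3 => exp (-(1/2 : ℝ) * ‖v‖ ^ 2)) := by
    have h := (GaussianFourier.integrable_cexp_neg_mul_sq_norm_add (V := R3)
      (b := (1/2 : ℂ)) (by norm_num) 0 0).norm
    refine h.congr ?_
    filter_upwards with v
    rw [Complex.norm_exp]
    congr 1
    simp [← Complex.ofReal_pow]
  have hint : Integrable (fun v : R3 => exp ((1 + 2*a) ^ 2 / 2) * exp (-(1/2 : ℝ) * ‖v‖ ^ 2)) :=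
    hg.const_mul _
  refine hint.mono' ?_ ?_
  · apply Continuous.aestronglyMeasurable
    fun_prop
  · filter_upwards with u
    have hc : |u 0| ≤ ‖u‖ := abs_coord_le_norm u 0
    have hb : -(‖u‖ ^ 2 + 2 * a * (u 0)) ≤ 2 * a * ‖u‖ - ‖u‖ ^ 2 := by
      have : -(u 0) ≤ |u 0| := neg_le_abs _
      nlinarith
    rw [Real.norm_eq_abs, abs_mul, abs_of_nonneg (exp_pos _).le, abs_norm]
    calc ‖u‖ * exp (-(‖u‖ ^ 2 + 2 * a * (u 0)))
        ≤ ‖u‖ * exp (2 * a * ‖u‖ - ‖u‖ ^ 2) :=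
          mul_le_mul_of_nonneg_left (exp_le_exp.mpr hb) (norm_nonneg u)
      _ ≤ exp ((1 + 2*a) ^ 2 / 2) * exp (-‖u‖ ^ 2 / 2) :=
          exp_bound_aux (norm_nonneg u) (by positivity)
      _ = exp ((1 + 2*a) ^ 2 / 2) * exp (-(1/2 : ℝ) * ‖u‖ ^ 2) := by ring_nf

lemma flat_integral {a : ℝ} (ha : 0 < a)
    (hF3 : Integrable (fun p : ℝ × (ℝ × ℝ) =>
      Real.sqrt (p.1 ^ 2 + (p.2.1 ^ 2 + p.2.2 ^ 2)) *
        exp (-((p.1 ^ 2 + (p.2.1 ^ 2 + p.2.2 ^ 2)) + 2 * a * p.1))) (volume.prod volume)) :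
    ∫ p : ℝ × (ℝ × ℝ), Real.sqrt (p.1 ^ 2 + (p.2.1 ^ 2 + p.2.2 ^ 2)) *
        exp (-((p.1 ^ 2 + (p.2.1 ^ 2 + p.2.2 ^ 2)) + 2 * a * p.1))
      = (π / a) * ∫ t in Ioi (0:ℝ), exp (-t ^ 2) * t ^ 2 * (exp (2 * a * t) - exp (-(2 * a * t))) := by
  have step1 : ∫ p : ℝ × (ℝ × ℝ), Real.sqrt (p.1 ^ 2 + (p.2.1 ^ 2 + p.2.2 ^ 2)) *
        exp (-((p.1 ^ 2 + (p.2.1 ^ 2 + p.2.2 ^ 2)) + 2 * a * p.1))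
      = ∫ x : ℝ, ∫ q : ℝ × ℝ, Real.sqrt (x ^ 2 + (q.1 ^ 2 + q.2 ^ 2)) *
          exp (-((x ^ 2 + (q.1 ^ 2 + q.2 ^ 2)) + 2 * a * x)) := by
    rw [Measure.volume_eq_prod]
    exact integral_prod _ hF3
  rw [step1]
  have step2 : ∀ x : ℝ, ∫ q : ℝ × ℝ, Real.sqrt (x ^ 2 + (q.1 ^ 2 + q.2 ^ 2)) *
        exp (-((x ^ 2 + (q.1 ^ 2 + q.2 ^ 2)) + 2 * a * x))
      = (2 * π) * (exp (-(2 * a * x)) * ∫ t in Ioi |x|, t ^ 2 * exp (-t ^ 2)) := by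
    intro x
    have : ∀ q : ℝ × ℝ, Real.sqrt (x ^ 2 + (q.1 ^ 2 + q.2 ^ 2)) *
          exp (-((x ^ 2 + (q.1 ^ 2 + q.2 ^ 2)) + 2 * a * x))
        = (Real.sqrt (x ^ 2 + (q.1 ^ 2 + q.2 ^ 2)) * exp (-(x ^ 2 + (q.1 ^ 2 + q.2 ^ 2)))) *
            exp (-(2 * a * x)) := by
      intro q
      rw [show -((x ^ 2 + (q.1 ^ 2 + q.2 ^ 2)) + 2 * a * x)
          = -(x ^ 2 + (q.1 ^ 2 + q.2 ^ 2)) + -(2 * a * x) by ring, exp_add]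
      ring
    rw [funext this, integral_mul_const, polar_lemma, subst_lemma]
    ring
  rw [funext step2, integral_const_mul, fubini_swap ha]
  have step3 : ∫ t in Ioi (0:ℝ),
        (t ^ 2 * exp (-t ^ 2)) * ((exp (2 * a * t) - exp (-(2 * a * t))) / (2 * a))
      = (∫ t in Ioi (0:ℝ), exp (-t ^ 2) * t ^ 2 * (exp (2 * a * t) - exp (-(2 * a * t)))) * (2 * a)⁻¹ := by
    rw [← integral_mul_const]
    apply setIntegral_congr_fun measurableSet_Ioi
    intro t _
    ring
  rw [step3]
  ring

end Aux

/-- For `q₂ ≠ 0`,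
`∫_{ℝ³} |q₁ − q₂|·exp(−|q₁|²) dq₁
  = (π·exp(−|q₂|²)/|q₂|) · ∫₀^∞ exp(−ρ²)·ρ²·(exp(2|q₂|ρ) − exp(−2|q₂|ρ)) dρ`. -/
theorem purity_stmt9 (q₂ : R3) (hq₂ : q₂ ≠ 0) :
    ∫ q₁ : R3, ‖q₁ - q₂‖ * Real.exp (-‖q₁‖ ^ 2)
      = (Real.pi * Real.exp (-‖q₂‖ ^ 2) / ‖q₂‖) *
          ∫ ρ in Set.Ioi (0 : ℝ),
            Real.exp (-ρ ^ 2) * ρ ^ 2 *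
              (Real.exp (2 * ‖q₂‖ * ρ) - Real.exp (-(2 * ‖q₂‖ * ρ))) := by
  set a : ℝ := ‖q₂‖ with hadef
  have ha : 0 < a := norm_pos_iff.mpr hq₂
  -- Step 1: translation
  have step1 : ∫ q₁ : R3, ‖q₁ - q₂‖ * exp (-‖q₁‖ ^ 2)
      = ∫ u : R3, ‖u‖ * exp (-‖u + q₂‖ ^ 2) := by
    rw [← integral_add_right_eq_self (fun q => ‖q - q₂‖ * exp (-‖q‖ ^ 2)) q₂]
    simp
  -- Step 2: expand the square
  have step2 : ∫ u : R3, ‖u‖ * exp (-‖u + q₂‖ ^ 2)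
      = exp (-a ^ 2) * ∫ u : R3, ‖u‖ * exp (-(‖u‖ ^ 2 + 2 * (inner ℝ u q₂ : ℝ))) := by
    rw [← integral_const_mul]
    congr 1
    funext u
    rw [norm_add_sq_real, show -(‖u‖ ^ 2 + 2 * (inner ℝ u q₂ : ℝ) + ‖q₂‖ ^ 2)
      = -‖q₂‖ ^ 2 + -(‖u‖ ^ 2 + 2 * (inner ℝ u q₂ : ℝ)) by ring, exp_add, ← hadef]
    ring
  -- Step 3: rotation
  set v : R3 := EuclideanSpace.single (0 : Fin 3) a with hvdef
  have hnv : ‖q₂‖ = ‖v‖ := by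
    rw [hvdef, EuclideanSpace.norm_single, Real.norm_eq_abs, abs_of_pos ha]
  set T : R3 ≃ₗᵢ[ℝ] R3 := Submodule.reflection (Submodule.span ℝ {q₂ - v})ᗮ with hTdef
  have hTq : T q₂ = v := Submodule.reflection_sub hnv
  have hTv : T v = q₂ := by
    have := Submodule.reflection_reflection (Submodule.span ℝ {q₂ - v})ᗮ q₂
    rw [← hTdef] at this
    rw [← hTq, this]
  have step3 : ∫ u : R3, ‖u‖ * exp (-(‖u‖ ^ 2 + 2 * (inner ℝ u q₂ : ℝ)))
      = ∫ u : R3, ‖u‖ * exp (-(‖u‖ ^ 2 + 2 * a * (u 0))) := by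
    rw [← T.measurePreserving.integral_comp T.toHomeomorph.measurableEmbedding
      (fun u : R3 => ‖u‖ * exp (-(‖u‖ ^ 2 + 2 * (inner ℝ u q₂ : ℝ))))]
    congr 1
    funext u
    have hinner : (inner ℝ (T u) q₂ : ℝ) = a * (u 0) := by
      rw [← hTv, T.inner_map_map, hvdef, EuclideanSpace.inner_single_right]
      simp
    rw [T.norm_map, hinner]
    ring_nf
  -- Step 4: transfer to ℝ × (ℝ × ℝ)
  have step4 : ∫ u : R3, ‖u‖ * exp (-(‖u‖ ^ 2 + 2 * a * (u 0)))
      = ∫ p : ℝ × (ℝ × ℝ), Real.sqrt (p.1 ^ 2 + (p.2.1 ^ 2 + p.2.2 ^ 2)) *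
          exp (-((p.1 ^ 2 + (p.2.1 ^ 2 + p.2.2 ^ 2)) + 2 * a * p.1)) := by
    rw [← ψe_measurePreserving.integral_comp ψe.measurableEmbedding
      (fun u : R3 => ‖u‖ * exp (-(‖u‖ ^ 2 + 2 * a * (u 0))))]
    congr 1
    funext p
    obtain ⟨h0, _, _⟩ := ψe_apply_coords p
    rw [ψe_norm p, h0, Real.sq_sqrt (by positivity)]
  have hF0 := integrable_F0 ha
  have hF3 : Integrable (fun p : ℝ × (ℝ × ℝ) =>
      Real.sqrt (p.1 ^ 2 + (p.2.1 ^ 2 + p.2.2 ^ 2)) *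
        exp (-((p.1 ^ 2 + (p.2.1 ^ 2 + p.2.2 ^ 2)) + 2 * a * p.1))) (volume.prod volume) := by
    rw [← Measure.volume_eq_prod]
    have := (ψe_measurePreserving.integrable_comp_emb ψe.measurableEmbedding
      (g := fun u : R3 => ‖u‖ * exp (-(‖u‖ ^ 2 + 2 * a * (u 0))))).mpr hF0
    refine this.congr ?_
    filter_upwards with p
    show ‖ψe p‖ * exp (-(‖ψe p‖ ^ 2 + 2 * a * ((ψe p) 0))) = _
    obtain ⟨h0, _, _⟩ := ψe_apply_coords p
    rw [ψe_norm p, h0, Real.sq_sqrt (by positivity)]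
  rw [step1, step2, step3, step4, flat_integral ha hF3]
  rw [hadef]
  ring
end
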